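/- arXiv:1408.1886 — 4 statements merged into one kernel-verified Lean document; each statement's English description precedes it below -/
import Mathlib

section
/- Fix an integer m ≥ 2. Let aₘ(n) be the number of permutations of [n] all of whose alternating runs have length less than m (equivalently, among any m−1 consecutive indices in {1,…,n−1} at least one is an alternating descent); aₘ(0)=1. In ℚ⟦X⟧, let Aₘ be the power series whose coefficient of Xⁿ is Eₙ/n! if n ≡ 0 (mod m), −Eₙ/n! if n ≡ 1 (mod m), and 0 otherwise. Then Aₘ · (Σ_{n=0}^∞ aₘ(n)·Xⁿ/n!) = 1. -/
/-!
Multiplying out, the claim is `∑ₖ ε(k) C(N,k) E_k a_m(N-k) = [N = 0]`, where `ε(k)` is `1`, `-1`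
or `0` according as `k ≡ 0`, `k ≡ 1` or neither mod `m`. The product `C(N,k) E_k a_m(N-k)` counts
the permutations `w` of `[N]` whose first `k` entries have no alternating descent (their pattern
is a complemented alternating permutation) and whose alternating descents after position `k`
meet every window of `m - 1` consecutive indices (their pattern is counted by `a_m(N-k)`, after
complementing when `k` is odd); position `k` itself is unconstrained. For a fixed `w` with
`N ≥ 1` the admissible `k` form an interval `[a, f]`, with `f` the first alternating descent
of `w`, and this interval is empty, or `[0, f]` with `f < m`, or has length exactly `m`: in each
case the signs `ε(k)` over it cancel.
-/

/-- The entry of the permutation `σ` of `[n]` at (1-based) position `i`,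
as a value in `{1, …, n}`; `0` if `i` is out of range. -/
def permEnt {n : ℕ} (σ : Equiv.Perm (Fin n)) (i : ℕ) : ℕ :=
  if h : 1 ≤ i ∧ i ≤ n then (σ ⟨i - 1, by omega⟩ : ℕ) + 1 else 0

/-- `i` is a descent of `σ`: `1 ≤ i ≤ n−1` and `π_i > π_{i+1}`. -/
def IsDescent {n : ℕ} (σ : Equiv.Perm (Fin n)) (i : ℕ) : Prop :=
  1 ≤ i ∧ i < n ∧ permEnt σ (i + 1) < permEnt σ i

/-- `i` is an alternating descent of `σ`: `i` odd with `π_i > π_{i+1}`,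
or `i` even with `π_i < π_{i+1}`. -/
def IsAltDescent {n : ℕ} (σ : Equiv.Perm (Fin n)) (i : ℕ) : Prop :=
  1 ≤ i ∧ i < n ∧
    ((i % 2 = 1 ∧ permEnt σ (i + 1) < permEnt σ i) ∨
     (i % 2 = 0 ∧ permEnt σ i < permEnt σ (i + 1)))

instance {n : ℕ} (σ : Equiv.Perm (Fin n)) (i : ℕ) : Decidable (IsDescent σ i) := by
  unfold IsDescent; infer_instance

instance {n : ℕ} (σ : Equiv.Perm (Fin n)) (i : ℕ) : Decidable (IsAltDescent σ i) := by
  unfold IsAltDescent; infer_instance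

/-- `i` is a peak of `σ`: `2 ≤ i ≤ n−1` and `π_{i−1} < π_i > π_{i+1}`. -/
def IsPeak {n : ℕ} (σ : Equiv.Perm (Fin n)) (i : ℕ) : Prop :=
  2 ≤ i ∧ i < n ∧ permEnt σ (i - 1) < permEnt σ i ∧ permEnt σ (i + 1) < permEnt σ i

/-- `i` is a valley of `σ`: `2 ≤ i ≤ n−1` and `π_{i−1} > π_i < π_{i+1}`. -/
def IsValley {n : ℕ} (σ : Equiv.Perm (Fin n)) (i : ℕ) : Prop :=
  2 ≤ i ∧ i < n ∧ permEnt σ i < permEnt σ (i - 1) ∧ permEnt σ i < permEnt σ (i + 1)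

/-- All valleys of `σ` are even and all peaks of `σ` are odd. -/
def GoodPerm {n : ℕ} (σ : Equiv.Perm (Fin n)) : Prop :=
  (∀ i, IsValley σ i → i % 2 = 0) ∧ (∀ i, IsPeak σ i → i % 2 = 1)

/-- `f n` is the number of permutations of `[n]` with all valleys even and all peaks odd. -/
noncomputable def fCount (n : ℕ) : ℕ :=
  Nat.card {σ : Equiv.Perm (Fin n) // GoodPerm σ}

/-- `g n` is the number of permutations of `[n]` with all valleys even and all peaks odd
having no descent at position `n − 1`. -/
noncomputable def gCount (n : ℕ) : ℕ :=
  Nat.card {σ : Equiv.Perm (Fin n) // GoodPerm σ ∧ ¬ IsDescent σ (n - 1)}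

/-- `σ` is an alternating permutation: `π₁ > π₂ < π₃ > π₄ < ⋯`. -/
def IsAltPerm {n : ℕ} (σ : Equiv.Perm (Fin n)) : Prop :=
  ∀ i, 1 ≤ i → i < n →
    (i % 2 = 1 → permEnt σ (i + 1) < permEnt σ i) ∧
    (i % 2 = 0 → permEnt σ i < permEnt σ (i + 1))

/-- The Euler number `Eₙ`, the number of alternating permutations of `[n]`. -/
noncomputable def eulerNum (n : ℕ) : ℕ :=
  Nat.card {σ : Equiv.Perm (Fin n) // IsAltPerm σ}

/-- `aCount m n` is the number of permutations of `[n]` all of whose alternating runs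
have length less than `m`: among any `m − 1` consecutive indices in `{1, …, n−1}`,
at least one is an alternating descent. -/
noncomputable def aCount (m n : ℕ) : ℕ :=
  Nat.card {σ : Equiv.Perm (Fin n) //
    ∀ i, 1 ≤ i → i + m ≤ n + 1 → ∃ j ∈ Finset.Ico i (i + m - 1), IsAltDescent σ j}

open Finset

section Entries

variable {n : ℕ}

lemma permEnt_of_le (σ : Equiv.Perm (Fin n)) {i : ℕ} (h1 : 1 ≤ i) (h2 : i ≤ n) :
    permEnt σ i = (σ ⟨i - 1, by omega⟩ : ℕ) + 1 :=
  dif_pos ⟨h1, h2⟩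

lemma permEnt_le (σ : Equiv.Perm (Fin n)) (i : ℕ) : permEnt σ i ≤ n := by
  unfold permEnt
  split_ifs
  · exact Fin.is_lt _
  · exact Nat.zero_le n

lemma permEnt_ne_permEnt (σ : Equiv.Perm (Fin n)) {i j : ℕ} (hi : 1 ≤ i ∧ i ≤ n)
    (hj : 1 ≤ j ∧ j ≤ n) (hij : i ≠ j) : permEnt σ i ≠ permEnt σ j := by
  rw [permEnt_of_le σ hi.1 hi.2, permEnt_of_le σ hj.1 hj.2, Ne, add_left_inj, ← Fin.ext_iff,
    σ.injective.eq_iff, Fin.mk.injEq]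
  omega

lemma permEnt_revPerm_mul (σ : Equiv.Perm (Fin n)) {i : ℕ} (h1 : 1 ≤ i) (h2 : i ≤ n) :
    permEnt (Fin.revPerm * σ) i = n + 1 - permEnt σ i := by
  rw [permEnt_of_le _ h1 h2, permEnt_of_le σ h1 h2, Equiv.Perm.mul_apply, Fin.revPerm_apply,
    Fin.val_rev]
  omega

lemma isAltDescent_revPerm_mul (σ : Equiv.Perm (Fin n)) {j : ℕ} (h1 : 1 ≤ j) (h2 : j < n) :
    IsAltDescent (Fin.revPerm * σ) j ↔ ¬ IsAltDescent σ j := by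
  have hne := permEnt_ne_permEnt σ (i := j) (j := j + 1) ⟨h1, h2.le⟩ ⟨by omega, h2⟩ (by omega)
  have hle := permEnt_le σ j
  have hle' := permEnt_le σ (j + 1)
  unfold IsAltDescent
  rw [permEnt_revPerm_mul σ h1 h2.le, permEnt_revPerm_mul σ (i := j + 1) (by omega) h2]
  omega

lemma isAltPerm_iff (σ : Equiv.Perm (Fin n)) :
    IsAltPerm σ ↔ ∀ j, 1 ≤ j → j < n → IsAltDescent σ j := by
  refine forall₃_congr fun j h1 h2 => ?_
  unfold IsAltDescent
  omega

end Entries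

section Split

variable {k l : ℕ}

lemma orderEmbOfFin_congr {α : Type*} [LinearOrder α] {s t : Finset α} (hst : s = t)
    (hs : s.card = k) (ht : t.card = k) : s.orderEmbOfFin hs = t.orderEmbOfFin ht := by
  subst hst
  rfl

lemma card_compl_of_card_eq {s : Finset (Fin (k + l))} (hs : s.card = k) : sᶜ.card = l := by
  rw [card_compl, hs, Fintype.card_fin, Nat.add_sub_cancel_left]

def headSet (w : Equiv.Perm (Fin (k + l))) : Finset (Fin (k + l)) :=
  univ.map ((Fin.castAddEmb l).trans w.toEmbedding)

lemma card_headSet (w : Equiv.Perm (Fin (k + l))) : (headSet w).card = k := by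
  simp [headSet]

lemma card_compl_headSet (w : Equiv.Perm (Fin (k + l))) : (headSet w)ᶜ.card = l :=
  card_compl_of_card_eq (card_headSet w)

lemma apply_castAdd_mem_headSet (w : Equiv.Perm (Fin (k + l))) (i : Fin k) :
    w (Fin.castAdd l i) ∈ headSet w :=
  mem_map_of_mem _ (mem_univ i)

lemma apply_natAdd_mem_compl_headSet (w : Equiv.Perm (Fin (k + l))) (j : Fin l) :
    w (Fin.natAdd k j) ∈ (headSet w)ᶜ := by
  rw [mem_compl, headSet, mem_map]
  rintro ⟨i, -, hi⟩
  have := congrArg Fin.val (w.injective hi)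
  simp only [Fin.coe_castAddEmb, Fin.val_castAdd, Fin.val_natAdd] at this
  omega

/-- The pattern of the first `k` entries of `w`, as a permutation of `Fin k`. -/
noncomputable def headStd (w : Equiv.Perm (Fin (k + l))) : Equiv.Perm (Fin k) :=
  Equiv.ofBijective (fun i => ((headSet w).orderIsoOfFin (card_headSet w)).symm
      ⟨w (Fin.castAdd l i), apply_castAdd_mem_headSet w i⟩) <|
    Finite.injective_iff_bijective.mp fun i i' h => by simpa using h

noncomputable def tailStd (w : Equiv.Perm (Fin (k + l))) : Equiv.Perm (Fin l) :=
  Equiv.ofBijective (fun j => ((headSet w)ᶜ.orderIsoOfFin (card_compl_headSet w)).symm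
      ⟨w (Fin.natAdd k j), apply_natAdd_mem_compl_headSet w j⟩) <|
    Finite.injective_iff_bijective.mp fun j j' h => by simpa using h

lemma orderEmbOfFin_headStd (w : Equiv.Perm (Fin (k + l))) (i : Fin k) :
    (headSet w).orderEmbOfFin (card_headSet w) (headStd w i) = w (Fin.castAdd l i) := by
  simp [headStd, ← coe_orderIsoOfFin_apply]

lemma orderEmbOfFin_tailStd (w : Equiv.Perm (Fin (k + l))) (j : Fin l) :
    (headSet w)ᶜ.orderEmbOfFin (card_compl_headSet w) (tailStd w j) = w (Fin.natAdd k j) := by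
  simp [tailStd, ← coe_orderIsoOfFin_apply]

/-- Fills the positions `0, …, k-1` with the values of `s` in the pattern `u` and the remaining
positions with the values of `sᶜ` in the pattern `v`. -/
noncomputable def joinPerm (s : Finset (Fin (k + l))) (hs : s.card = k) (u : Equiv.Perm (Fin k))
    (v : Equiv.Perm (Fin l)) : Equiv.Perm (Fin (k + l)) :=
  finSumFinEquiv.symm.trans <| (Equiv.sumCongr u v).trans <|
    (Equiv.sumCongr (s.orderIsoOfFin hs).toEquiv
      ((sᶜ.orderIsoOfFin (card_compl_of_card_eq hs)).toEquiv.trans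
        (Equiv.subtypeEquivRight fun _ => mem_compl))).trans (Equiv.sumCompl (· ∈ s))

lemma joinPerm_castAdd (s : Finset (Fin (k + l))) (hs : s.card = k) (u : Equiv.Perm (Fin k))
    (v : Equiv.Perm (Fin l)) (i : Fin k) :
    joinPerm s hs u v (Fin.castAdd l i) = s.orderEmbOfFin hs (u i) := by
  simp [joinPerm]

lemma joinPerm_natAdd (s : Finset (Fin (k + l))) (hs : s.card = k) (u : Equiv.Perm (Fin k))
    (v : Equiv.Perm (Fin l)) (j : Fin l) :
    joinPerm s hs u v (Fin.natAdd k j) = sᶜ.orderEmbOfFin (card_compl_of_card_eq hs) (v j) := by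
  simp [joinPerm]

lemma headSet_joinPerm (s : Finset (Fin (k + l))) (hs : s.card = k) (u : Equiv.Perm (Fin k))
    (v : Equiv.Perm (Fin l)) : headSet (joinPerm s hs u v) = s := by
  ext x
  simp only [headSet, mem_map, mem_univ, true_and, Function.Embedding.trans_apply,
    Fin.coe_castAddEmb, Equiv.coe_toEmbedding, joinPerm_castAdd]
  constructor
  · rintro ⟨i, rfl⟩
    exact orderEmbOfFin_mem s hs _
  · intro hx
    obtain ⟨i, hi⟩ := (Set.ext_iff.mp (range_orderEmbOfFin s hs) x).mpr hx
    exact ⟨u.symm i, by simpa using hi⟩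

lemma headStd_joinPerm (s : Finset (Fin (k + l))) (hs : s.card = k) (u : Equiv.Perm (Fin k))
    (v : Equiv.Perm (Fin l)) : headStd (joinPerm s hs u v) = u := by
  ext i : 1
  apply (s.orderEmbOfFin hs).injective
  rw [← joinPerm_castAdd s hs u v, ← orderEmbOfFin_headStd,
    orderEmbOfFin_congr (headSet_joinPerm s hs u v)]

lemma tailStd_joinPerm (s : Finset (Fin (k + l))) (hs : s.card = k) (u : Equiv.Perm (Fin k))
    (v : Equiv.Perm (Fin l)) : tailStd (joinPerm s hs u v) = v := by
  ext j : 1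
  apply (sᶜ.orderEmbOfFin (card_compl_of_card_eq hs)).injective
  rw [← joinPerm_natAdd s hs u v, ← orderEmbOfFin_tailStd,
    orderEmbOfFin_congr (congrArg compl (headSet_joinPerm s hs u v))]

noncomputable def splitPerm :
    Equiv.Perm (Fin (k + l)) ≃
      {s : Finset (Fin (k + l)) // s.card = k} × Equiv.Perm (Fin k) × Equiv.Perm (Fin l) where
  toFun w := (⟨headSet w, card_headSet w⟩, headStd w, tailStd w)
  invFun x := joinPerm x.1.1 x.1.2 x.2.1 x.2.2
  left_inv w := by
    ext i : 1
    induction i using Fin.addCases with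
    | left i => rw [joinPerm_castAdd, orderEmbOfFin_headStd]
    | right j => rw [joinPerm_natAdd, orderEmbOfFin_tailStd]
  right_inv := fun ⟨⟨s, hs⟩, u, v⟩ => by
    simp only [headSet_joinPerm, headStd_joinPerm, tailStd_joinPerm]

lemma card_filter_headStd_and_tailStd (A : Equiv.Perm (Fin k) → Prop)
    (B : Equiv.Perm (Fin l) → Prop) [DecidablePred A] [DecidablePred B] :
    #{w : Equiv.Perm (Fin (k + l)) | A (headStd w) ∧ B (tailStd w)} =
      (k + l).choose k * #{u | A u} * #{v | B v} := by
  rw [card_equiv splitPerm (t := (univ : Finset _) ×ˢ ((univ.filter A) ×ˢ (univ.filter B)))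
      (by simp [splitPerm]), card_product, card_product, card_univ, Fintype.card_finset_len,
    Fintype.card_fin, mul_assoc]

end Split

section SplitDescents

variable {k l : ℕ} (w : Equiv.Perm (Fin (k + l)))

lemma permEnt_headStd_lt_iff {i i' : ℕ} (hi : 1 ≤ i ∧ i ≤ k) (hi' : 1 ≤ i' ∧ i' ≤ k) :
    permEnt (headStd w) i < permEnt (headStd w) i' ↔ permEnt w i < permEnt w i' := by
  rw [permEnt_of_le _ hi.1 hi.2, permEnt_of_le _ hi'.1 hi'.2, permEnt_of_le w hi.1 (by omega),
    permEnt_of_le w hi'.1 (by omega), add_lt_add_iff_right, add_lt_add_iff_right, ← Fin.lt_def,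
    ← Fin.lt_def, ← (headSet w).orderEmbOfFin (card_headSet w) |>.lt_iff_lt,
    orderEmbOfFin_headStd, orderEmbOfFin_headStd]
  rfl

lemma permEnt_tailStd_lt_iff {j j' : ℕ} (hj : 1 ≤ j ∧ j ≤ l) (hj' : 1 ≤ j' ∧ j' ≤ l) :
    permEnt (tailStd w) j < permEnt (tailStd w) j' ↔ permEnt w (k + j) < permEnt w (k + j') := by
  rw [permEnt_of_le _ hj.1 hj.2, permEnt_of_le _ hj'.1 hj'.2, permEnt_of_le w (i := k + j)
    (by omega) (by omega), permEnt_of_le w (i := k + j') (by omega) (by omega),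
    add_lt_add_iff_right, add_lt_add_iff_right, ← Fin.lt_def, ← Fin.lt_def,
    ← (headSet w)ᶜ.orderEmbOfFin (card_compl_headSet w) |>.lt_iff_lt,
    orderEmbOfFin_tailStd, orderEmbOfFin_tailStd]
  simp only [Fin.natAdd_mk, Nat.add_sub_assoc hj.1, Nat.add_sub_assoc hj'.1]

lemma isAltDescent_headStd_iff {j : ℕ} (h1 : 1 ≤ j) (h2 : j < k) :
    IsAltDescent (headStd w) j ↔ IsAltDescent w j := by
  have hasc := permEnt_headStd_lt_iff w (i := j) (i' := j + 1) ⟨h1, h2.le⟩ ⟨by omega, h2⟩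
  have hdesc := permEnt_headStd_lt_iff w (i := j + 1) (i' := j) ⟨by omega, h2⟩ ⟨h1, h2.le⟩
  unfold IsAltDescent
  omega

lemma isAltDescent_add_iff {j : ℕ} (h1 : 1 ≤ j) (h2 : j < l) :
    IsAltDescent w (k + j) ↔ (IsAltDescent (tailStd w) j ↔ Even k) := by
  have hasc := permEnt_tailStd_lt_iff w (j := j) (j' := j + 1) ⟨h1, h2.le⟩ ⟨by omega, h2⟩
  have hdesc := permEnt_tailStd_lt_iff w (j := j + 1) (j' := j) ⟨by omega, h2⟩ ⟨h1, h2.le⟩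
  have hne := permEnt_ne_permEnt (tailStd w) (i := j) (j := j + 1) ⟨h1, h2.le⟩ ⟨by omega, h2⟩
    (by omega)
  unfold IsAltDescent
  rw [Nat.even_iff, add_assoc]
  omega

end SplitDescents

def WindowsHit (m : ℕ) (d : ℕ → Prop) (a n : ℕ) : Prop :=
  ∀ i, a ≤ i → i + m ≤ n + 1 → ∃ j ∈ Ico i (i + m - 1), d j

instance {m : ℕ} {d : ℕ → Prop} [DecidablePred d] {a n : ℕ} : Decidable (WindowsHit m d a n) :=
  decidable_of_iff (∀ i, a ≤ i → i < n + 2 - m → ∃ j ∈ Ico i (i + m - 1), d j) <|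
    forall₂_congr fun i _ => imp_congr_left (by omega)

section Windows

variable {m : ℕ} {d d' : ℕ → Prop}

lemma WindowsHit.mono {a a' n : ℕ} (h : WindowsHit m d a n) (ha : a ≤ a') :
    WindowsHit m d a' n :=
  fun i hi => h i (ha.trans hi)

lemma windowsHit_congr {a n : ℕ} (h : ∀ j, a ≤ j → j < n → (d j ↔ d' j)) :
    WindowsHit m d a n ↔ WindowsHit m d' a n := by
  refine forall₃_congr fun i hi hin => exists_congr fun j => and_congr_right fun hj => ?_
  rw [mem_Ico] at hj
  exact h j (by omega) (by omega)

lemma windowsHit_add_iff {k l : ℕ} :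
    WindowsHit m d (k + 1) (k + l) ↔ WindowsHit m (fun j => d (k + j)) 1 l := by
  constructor
  · intro h i hi hil
    obtain ⟨j, hj, hdj⟩ := h (k + i) (by omega) (by omega)
    rw [mem_Ico] at hj
    refine ⟨j - k, mem_Ico.mpr (by omega), ?_⟩
    show d (k + (j - k))
    rwa [Nat.add_sub_cancel' (by omega : k ≤ j)]
  · intro h i hi hil
    obtain ⟨j, hj, hdj⟩ := h (i - k) (by omega) (by omega)
    rw [mem_Ico] at hj
    exact ⟨k + j, mem_Ico.mpr (by omega), hdj⟩

end Windows

def altSign (m k : ℕ) : ℤ :=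
  if k % m = 0 then 1 else if k % m = 1 then -1 else 0

section AltSign

variable {m : ℕ}

lemma add_one_mod_eq_one_iff (hm : 2 ≤ m) (t : ℕ) : (t + 1) % m = 1 ↔ t % m = 0 := by
  have := Nat.mod_lt t (by omega : 0 < m)
  rw [Nat.add_mod_eq_ite, Nat.mod_eq_of_lt (by omega : 1 < m)]
  split_ifs <;> omega

lemma sum_range_altSign (hm : 2 ≤ m) (t : ℕ) :
    ∑ k ∈ range t, altSign m k = if t % m = 1 then 1 else 0 := by
  induction t with
  | zero => simp [Nat.zero_mod]
  | succ t ih =>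
    rw [sum_range_succ, ih]
    simp only [add_one_mod_eq_one_iff hm, altSign]
    split_ifs <;> omega

lemma sum_altSign_ite_windowsHit (hm : 2 ≤ m) (d : ℕ → Prop) [DecidablePred d] (N : ℕ) :
    ∑ k ∈ range (N + 1),
        (if (∀ j : ℕ, 1 ≤ j → j < k → ¬ d j) ∧ WindowsHit m d (k + 1) N then altSign m k else 0) =
      if N = 0 then 1 else 0 := by
  rcases Nat.eq_zero_or_pos N with rfl | hN
  · rw [if_pos rfl, zero_add, sum_range_one, if_pos ⟨fun j _ hj => absurd hj j.not_lt_zero,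
      fun i hi him => absurd him (by omega)⟩]
    simp [altSign]
  rw [if_neg hN.ne']
  obtain ⟨f, hf1, hfN, hbefore, hf⟩ : ∃ f, 1 ≤ f ∧ f ≤ N ∧ (∀ j : ℕ, 1 ≤ j → j < f → ¬ d j) ∧
      (f < N → d f) := by
    have hex : ∃ f, 1 ≤ f ∧ (N ≤ f ∨ d f) := ⟨N, hN, Or.inl le_rfl⟩
    exact ⟨Nat.find hex, (Nat.find_spec hex).1, Nat.find_min' hex ⟨hN, Or.inl le_rfl⟩,
      fun j hj hjf hdj => Nat.find_min hex hjf ⟨hj, Or.inr hdj⟩,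
      fun hlt => (Nat.find_spec hex).2.resolve_left (by omega)⟩
  obtain ⟨a, ha⟩ : ∃ a, ∀ k, WindowsHit m d (k + 1) N ↔ a ≤ k := by
    have hex : ∃ a, WindowsHit m d (a + 1) N := ⟨N, fun i hi hiN => by omega⟩
    exact ⟨Nat.find hex, fun k => ⟨fun h => Nat.find_min' hex h,
      fun h => (Nat.find_spec hex).mono (by omega)⟩⟩
  have hfilter : {k ∈ range (N + 1) | (∀ j : ℕ, 1 ≤ j → j < k → ¬ d j) ∧
      WindowsHit m d (k + 1) N} = Ico a (f + 1) := by
    ext k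
    simp only [mem_filter, mem_range, mem_Ico, ha]
    constructor
    · rintro ⟨hk, hpre, hak⟩
      exact ⟨hak, Nat.lt_succ_of_le (not_lt.mp fun hfk => hpre f hf1 hfk (hf (by omega)))⟩
    · rintro ⟨hak, hkf⟩
      exact ⟨by omega, fun j hj hjk => hbefore j hj (by omega), hak⟩
  rw [← sum_filter, hfilter]
  rcases lt_or_ge f a with hfa | haf
  · rw [Ico_eq_empty (by omega), sum_empty]
  rw [sum_Ico_eq_sub _ (by omega), sum_range_altSign hm, sum_range_altSign hm, sub_eq_zero]
  refine if_congr ?_ rfl rfl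
  rcases Nat.eq_zero_or_pos a with rfl | ha0
  · have hfm : f < m := by
      by_contra! hmf
      obtain ⟨j, hj, hdj⟩ := (ha 0).mpr le_rfl 1 le_rfl (by omega)
      rw [mem_Ico] at hj
      exact hbefore j hj.1 (by omega) hdj
    rw [add_one_mod_eq_one_iff hm, Nat.mod_eq_of_lt hfm, Nat.zero_mod]
    omega
  · obtain ⟨i, hai, hiN, hmiss⟩ : ∃ i, a ≤ i ∧ i + m ≤ N + 1 ∧
        ∀ j ∈ Ico i (i + m - 1), ¬ d j := by
      have h := (ha (a - 1)).not.mpr (by omega)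
      simp only [WindowsHit, Nat.sub_add_cancel ha0] at h
      push Not at h
      exact h
    obtain rfl : a = i := by
      by_contra hia
      obtain ⟨j, hj, hdj⟩ := (ha a).mpr le_rfl i (by omega) hiN
      exact hmiss j hj hdj
    have hfa : f + 1 = a + m := by
      refine le_antisymm (not_lt.mp fun hlt => ?_) (not_lt.mp fun hlt => ?_)
      · obtain ⟨j, hj, hdj⟩ := (ha a).mpr le_rfl (a + 1) le_rfl (by omega)
        rw [mem_Ico] at hj
        exact hbefore j (by omega) (by omega) hdj
      · exact hmiss f (mem_Ico.mpr ⟨haf, by omega⟩) (hf (by omega))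
    rw [hfa, Nat.add_mod_right]

end AltSign

section Counting

lemma card_filter_revPerm_mul {n : ℕ} (p : Equiv.Perm (Fin n) → Prop) [DecidablePred p] :
    #{σ | p (Fin.revPerm * σ)} = #{σ | p σ} :=
  card_equiv (Equiv.mulLeft Fin.revPerm) (by simp)

lemma card_filter_forall_not_isAltDescent (k : ℕ) :
    #{u : Equiv.Perm (Fin k) | ∀ j : ℕ, 1 ≤ j → j < k → ¬ IsAltDescent u j} = eulerNum k := by
  classical
  rw [eulerNum, Nat.card_eq_fintype_card, Fintype.card_subtype, ← card_filter_revPerm_mul]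
  refine congrArg card (filter_congr fun u _ => ?_)
  rw [isAltPerm_iff]
  exact forall₃_congr fun j h1 h2 => by rw [isAltDescent_revPerm_mul u h1 h2, not_not]

lemma card_filter_windowsHit_iff_even (m k l : ℕ) :
    #{v : Equiv.Perm (Fin l) | WindowsHit m (fun j => IsAltDescent v j ↔ Even k) 1 l} =
      aCount m l := by
  classical
  rw [aCount, Nat.card_eq_fintype_card, Fintype.card_subtype]
  rcases Nat.even_or_odd k with hk | hk
  · exact congrArg card (filter_congr fun v _ => by simp only [hk, iff_true]; rfl)
  · rw [← card_filter_revPerm_mul]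
    refine congrArg card (filter_congr fun v _ => windowsHit_congr fun j h1 h2 => ?_)
    rw [isAltDescent_revPerm_mul v h1 h2, iff_false_right (Nat.not_even_iff_odd.mpr hk), not_not]

lemma card_filter_isAltDescent_windowsHit (m k l : ℕ) :
    #{w : Equiv.Perm (Fin (k + l)) | (∀ j : ℕ, 1 ≤ j → j < k → ¬ IsAltDescent w j) ∧
        WindowsHit m (IsAltDescent w) (k + 1) (k + l)} =
      (k + l).choose k * eulerNum k * aCount m l := by
  rw [← card_filter_forall_not_isAltDescent, ← card_filter_windowsHit_iff_even m k l,
    ← card_filter_headStd_and_tailStd]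
  refine congrArg card (filter_congr fun w _ => and_congr ?_ ?_)
  · exact forall₃_congr fun j h1 h2 => (isAltDescent_headStd_iff w h1 h2).not.symm
  · rw [windowsHit_add_iff]
    exact windowsHit_congr fun j h1 h2 => isAltDescent_add_iff w h1 h2

lemma sum_choose_altSign_eulerNum_aCount {m : ℕ} (hm : 2 ≤ m) (N : ℕ) :
    ∑ k ∈ range (N + 1), (N.choose k : ℤ) * (altSign m k * eulerNum k) * aCount m (N - k) =
      if N = 0 then 1 else 0 := by
  have hcount : ∀ k ∈ range (N + 1),
      (N.choose k : ℤ) * (altSign m k * eulerNum k) * aCount m (N - k) =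
        ∑ w : Equiv.Perm (Fin N), if (∀ j : ℕ, 1 ≤ j → j < k → ¬ IsAltDescent w j) ∧
          WindowsHit m (IsAltDescent w) (k + 1) N then altSign m k else 0 := by
    intro k hk
    obtain ⟨l, rfl⟩ := Nat.exists_eq_add_of_le (mem_range_succ_iff.mp hk)
    rw [← sum_filter, sum_const, card_filter_isAltDescent_windowsHit, Nat.add_sub_cancel_left,
      nsmul_eq_mul]
    push_cast
    ring
  rw [sum_congr rfl hcount, sum_comm]
  simp only [sum_altSign_ite_windowsHit hm]
  rw [sum_const, card_univ, Fintype.card_perm, Fintype.card_fin]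
  split_ifs with hN
  · simp [hN]
  · simp

end Counting

lemma coeff_mk_div_factorial_mul (x y : ℕ → ℚ) (N : ℕ) :
    PowerSeries.coeff N (PowerSeries.mk (fun n => x n / n.factorial) *
        PowerSeries.mk (fun n => y n / n.factorial)) =
      (∑ k ∈ range (N + 1), N.choose k * x k * y (N - k)) / N.factorial := by
  rw [PowerSeries.coeff_mul, Nat.sum_antidiagonal_eq_sum_range_succ
    (fun i j => PowerSeries.coeff i _ * PowerSeries.coeff j _), sum_div]
  refine sum_congr rfl fun k hk => ?_
  simp only [PowerSeries.coeff_mk]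
  rw [Nat.cast_choose ℚ (mem_range_succ_iff.mp hk)]
  field_simp

/-- for `m ≥ 2`, in `ℚ⟦X⟧`, letting `Aₘ` have coefficient of `Xⁿ` equal to
`Eₙ/n!` if `n ≡ 0 (mod m)`, `−Eₙ/n!` if `n ≡ 1 (mod m)`, and `0` otherwise, we have
`Aₘ · Σₙ aₘ(n)·Xⁿ/n! = 1`. -/
theorem statement8 (m : ℕ) (hm : 2 ≤ m) :
    (PowerSeries.mk (fun n : ℕ =>
        if n % m = 0 then (eulerNum n : ℚ) / n.factorial
        else if n % m = 1 then -((eulerNum n : ℚ) / n.factorial)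
        else 0)) *
      (PowerSeries.mk (fun n : ℕ => (aCount m n : ℚ) / n.factorial)) = 1 := by
  have hA : (fun n : ℕ => if n % m = 0 then (eulerNum n : ℚ) / n.factorial
      else if n % m = 1 then -((eulerNum n : ℚ) / n.factorial) else 0) =
      fun n => ((altSign m n * eulerNum n : ℤ) : ℚ) / n.factorial := by
    funext n
    unfold altSign
    split_ifs <;> push_cast <;> ring
  rw [hA]
  ext N
  have key := congrArg (Int.cast : ℤ → ℚ) (sum_choose_altSign_eulerNum_aCount hm N)
  push_cast at key
  rw [coeff_mk_div_factorial_mul]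
  push_cast
  rw [key, PowerSeries.coeff_one]
  split_ifs with hN
  · simp [hN]
  · simp
end

section
/- Let L = (L₁,…,L_k) be a composition of n (a sequence of positive integers with L₁+⋯+L_k = n) and let D(L) = {L₁, L₁+L₂, …, L₁+⋯+L_{k−1}} ⊆ {1,…,n−1}. Then the number of permutations of [n] whose set of alternating descents is contained in D(L) equals (n!/(L₁!·⋯·L_k!))·E_{L₁}·E_{L₂}·⋯·E_{L_k}. -/
/-!
The condition says that no alternating descent occurs strictly inside a block of `L`. This only
depends on the relative order of the entries of each block: read as a word on its own, the block
starting after `s` entries must go up exactly at the positions `j` with `s + j` even. Up to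
complementing values this is an alternating permutation, so each block allows `E_{L_i}` patterns.
Permuting positions inside the blocks acts freely on the words and multiplies their block patterns
on the right, so each family of patterns is realised by the same number `n!/∏ L_i!` of words.
-/

open Finset

section Zigzag

variable {β γ : Type*} [LinearOrder β] [LinearOrder γ] {m : ℕ}

-- `f` is the factor at 0-based positions `s, s + 1, …` of a word with no alternating descent
-- inside that factor.
def IsZigzag (s : ℕ) (f : Fin m → β) : Prop :=
  ∀ j (hj : j + 1 < m), f ⟨j, by omega⟩ < f ⟨j + 1, hj⟩ ↔ Even (s + j)

theorem isZigzag_congr {s : ℕ} {f : Fin m → β} {g : Fin m → γ}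
    (h : ∀ a b, f a < f b ↔ g a < g b) : IsZigzag s f ↔ IsZigzag s g := by
  simp only [IsZigzag, h]

theorem Function.Injective.lt_iff_not_lt {α : Type*} {f : α → β} (hf : Function.Injective f)
    {a b : α} (hab : a ≠ b) : f b < f a ↔ ¬ f a < f b :=
  lt_iff_not_ge.trans (not_congr (hf.ne hab).le_iff_lt)

theorem isZigzag_succ_iff {s : ℕ} (q : Equiv.Perm (Fin m)) :
    IsZigzag (s + 1) q ↔ IsZigzag s (Equiv.mulLeft Fin.revPerm q) := by
  refine forall₂_congr fun j hj => ?_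
  simp only [Equiv.coe_mulLeft, Equiv.Perm.coe_mul, Function.comp_apply, Fin.revPerm_apply,
    Fin.rev_lt_rev]
  rw [q.injective.lt_iff_not_lt (by simp [Fin.ext_iff]), add_right_comm, Nat.even_add_one]
  tauto

end Zigzag

section AltDescents

variable {n : ℕ}

theorem permEnt_succ (σ : Equiv.Perm (Fin n)) {j : ℕ} (hj : j < n) :
    permEnt σ (j + 1) = σ ⟨j, hj⟩ + 1 :=
  dif_pos ⟨by omega, hj⟩

theorem isAltDescent_succ_iff (σ : Equiv.Perm (Fin n)) {j : ℕ} (hj : j + 1 < n) :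
    IsAltDescent σ (j + 1) ↔ (σ ⟨j, by omega⟩ < σ ⟨j + 1, hj⟩ ↔ ¬ Even j) := by
  have hne : (σ ⟨j, by omega⟩ : ℕ) ≠ σ ⟨j + 1, hj⟩ :=
    Fin.val_ne_of_ne (σ.injective.ne (by simp [Fin.ext_iff]))
  rw [IsAltDescent, permEnt_succ σ hj, permEnt_succ σ (by omega), Fin.lt_def, Nat.even_iff]
  omega

theorem isAltPerm_iff_isZigzag (τ : Equiv.Perm (Fin n)) : IsAltPerm τ ↔ IsZigzag 1 τ := by
  have h : IsAltPerm τ ↔ ∀ j (hj : j + 1 < n), IsAltDescent τ (j + 1) := by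
    refine ⟨fun h j hj => ?_, fun h i hi hin => ?_⟩
    · have := h (j + 1) (by omega) hj
      unfold IsAltDescent
      omega
    · obtain ⟨j, rfl⟩ : ∃ j, i = j + 1 := ⟨i - 1, by omega⟩
      have := h j hin
      unfold IsAltDescent at this
      omega
  rw [h]
  refine forall₂_congr fun j hj => ?_
  rw [isAltDescent_succ_iff τ hj]
  simp only [add_comm 1 j, Nat.even_add_one]

theorem forall_isAltDescent_imp_iff (σ : Equiv.Perm (Fin n)) (D : ℕ → Prop) :
    (∀ m, IsAltDescent σ m → D m) ↔
      ∀ j (hj : j + 1 < n), ¬ D (j + 1) → (σ ⟨j, by omega⟩ < σ ⟨j + 1, hj⟩ ↔ Even j) := by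
  refine ⟨fun h j hj hD => ?_, fun h m hm => ?_⟩
  · have := mt (h (j + 1)) hD
    rw [isAltDescent_succ_iff σ hj] at this
    tauto
  · obtain ⟨j, rfl⟩ : ∃ j, m = j + 1 := ⟨m - 1, by have := hm.1; omega⟩
    have hj := hm.2.1
    rw [isAltDescent_succ_iff σ hj] at hm
    by_contra hD
    have := h j hj hD
    tauto

end AltDescents

theorem card_isZigzag (s m : ℕ) :
    Nat.card {q : Equiv.Perm (Fin m) // IsZigzag s q} = eulerNum m := by
  have step (s : ℕ) : Nat.card {q : Equiv.Perm (Fin m) // IsZigzag (s + 1) q} =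
      Nat.card {q : Equiv.Perm (Fin m) // IsZigzag s q} :=
    Nat.card_congr (Equiv.subtypeEquiv (Equiv.mulLeft Fin.revPerm) isZigzag_succ_iff)
  have parity_free (s : ℕ) : Nat.card {q : Equiv.Perm (Fin m) // IsZigzag s q} =
      Nat.card {q : Equiv.Perm (Fin m) // IsZigzag 0 q} := by
    induction s with
    | zero => rfl
    | succ s ih => rw [step, ih]
  rw [parity_free, ← step 0, eulerNum]
  exact Nat.card_congr (Equiv.subtypeEquivRight fun τ => (isAltPerm_iff_isZigzag τ).symm)

section BlockStarts

variable {k : ℕ} (L : Fin k → ℕ)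

def blockStart (i : ℕ) : ℕ :=
  ∑ j ∈ univ.filter (fun j : Fin k => (j : ℕ) < i), L j

def IsBlockBoundary (m : ℕ) : Prop :=
  ∃ i : ℕ, 1 ≤ i ∧ i < k ∧ m = blockStart L i

theorem blockStart_mono : Monotone (blockStart L) := fun _ _ hab =>
  sum_le_sum_of_subset (monotone_filter_right _ fun _ _ hj => lt_of_lt_of_le hj hab)

theorem blockStart_succ (i : Fin k) : blockStart L (i + 1) = blockStart L i + L i := by
  have h : univ.filter (fun j : Fin k => (j : ℕ) < i + 1) =
      insert i (univ.filter fun j : Fin k => (j : ℕ) < i) := by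
    ext j
    simp only [mem_filter, mem_univ, true_and, mem_insert, Fin.ext_iff]
    omega
  rw [blockStart, h, sum_insert (by simp), add_comm]
  rfl

theorem blockStart_length : blockStart L k = ∑ i, L i := by
  rw [blockStart, filter_true_of_mem fun j _ => j.isLt]

theorem finSigmaFinEquiv_val (x : Σ i, Fin (L i)) :
    (finSigmaFinEquiv x : ℕ) = blockStart L x.1 + x.2 := by
  rw [finSigmaFinEquiv_apply, blockStart]
  congr 1
  refine sum_bij (fun j _ => Fin.castLE x.1.isLt.le j) (fun j _ => ?_)
    (fun _ _ _ _ h => Fin.castLE_injective _ h) (fun j hj => ?_) (fun _ _ => rfl)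
  · simp only [mem_filter, mem_univ, true_and, Fin.val_castLE]
    exact j.isLt
  · exact ⟨⟨j, by simpa using hj⟩, mem_univ _, rfl⟩

theorem blockStart_add_lt (i : Fin k) (j : Fin (L i)) : blockStart L i + j < ∑ i, L i := by
  have := blockStart_mono L (show (i : ℕ) + 1 ≤ k from i.isLt)
  rw [blockStart_succ, blockStart_length] at this
  omega

theorem finSigmaFinEquiv_mk (i : Fin k) (j : Fin (L i)) :
    finSigmaFinEquiv ⟨i, j⟩ = ⟨blockStart L i + j, blockStart_add_lt L i j⟩ :=
  Fin.ext (finSigmaFinEquiv_val L _)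

theorem isBlockBoundary_succ_iff (i : Fin k) (j : Fin (L i))
    (hj : blockStart L i + j + 1 < ∑ i, L i) :
    IsBlockBoundary L (blockStart L i + j + 1) ↔ j + 1 = L i := by
  have hsucc := blockStart_succ L i
  constructor
  · rintro ⟨i', -, -, heq⟩
    have := j.isLt
    rcases le_or_gt i' i with hle | hlt
    · have := blockStart_mono L hle
      omega
    · have := blockStart_mono L (show (i : ℕ) + 1 ≤ i' from hlt)
      omega
  · intro hjL
    refine ⟨i + 1, by omega, ?_, by omega⟩
    by_contra hk
    have hik : (i : ℕ) + 1 = k := by have := i.isLt; omega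
    rw [hik, blockStart_length] at hsucc
    omega

theorem altDescents_subset_blockBoundaries_iff (σ : Equiv.Perm (Fin (∑ i, L i))) :
    (∀ m, IsAltDescent σ m → IsBlockBoundary L m) ↔
      ∀ i : Fin k,
        IsZigzag (blockStart L i) fun j : Fin (L i) => σ (finSigmaFinEquiv ⟨i, j⟩) := by
  rw [forall_isAltDescent_imp_iff]
  constructor
  · intro h i j hj
    have hlt := blockStart_add_lt L i ⟨j + 1, hj⟩
    have := h (blockStart L i + j) hlt
      ((isBlockBoundary_succ_iff L i ⟨j, by omega⟩ hlt).not.2 (by dsimp only; omega))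
    simpa only [finSigmaFinEquiv_mk, add_assoc] using this
  · intro h p hp hD
    obtain ⟨⟨i, j⟩, hx⟩ := finSigmaFinEquiv.surjective (⟨p, by omega⟩ : Fin (∑ i, L i))
    obtain rfl : blockStart L i + j = p := by simpa [finSigmaFinEquiv_mk] using hx
    have hj : (j : ℕ) + 1 < L i := by
      have := (isBlockBoundary_succ_iff L i j hp).not.1 hD
      omega
    simpa only [finSigmaFinEquiv_mk, add_assoc] using h i j hj

end BlockStarts

section Standardization

variable {β : Type*} [LinearOrder β] {m : ℕ}

theorem Equiv.Perm.eq_of_forall_lt_iff {p q : Equiv.Perm (Fin m)}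
    (h : ∀ a b, p a < p b ↔ q a < q b) : p = q := by
  have hmono : Monotone (p * q⁻¹) := fun x y hxy => by
    simp only [Equiv.Perm.coe_mul, Function.comp_apply, Equiv.Perm.coe_inv]
    rw [← not_lt, h, not_lt, q.apply_symm_apply, q.apply_symm_apply]
    exact hxy
  exact mul_inv_eq_one.1 ((Equiv.Perm.monotone_iff _).1 hmono)

def stdPerm (f : Fin m → β) : Equiv.Perm (Fin m) := (Tuple.sort f)⁻¹

theorem stdPerm_lt_stdPerm {f : Fin m → β} (hf : Function.Injective f) (a b : Fin m) :
    stdPerm f a < stdPerm f b ↔ f a < f b := by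
  have hsorted : StrictMono (f ∘ Tuple.sort f) :=
    (Tuple.monotone_sort f).strictMono_of_injective (hf.comp (Tuple.sort f).injective)
  conv_rhs => rw [← (Tuple.sort f).apply_symm_apply a, ← (Tuple.sort f).apply_symm_apply b]
  exact hsorted.lt_iff_lt.symm

theorem stdPerm_comp {f : Fin m → β} (hf : Function.Injective f) (q : Equiv.Perm (Fin m)) :
    stdPerm (f ∘ q) = stdPerm f * q :=
  Equiv.Perm.eq_of_forall_lt_iff fun a b => by
    rw [stdPerm_lt_stdPerm (hf.comp q.injective), Equiv.Perm.mul_apply, Equiv.Perm.mul_apply,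
      stdPerm_lt_stdPerm hf, Function.comp_apply, Function.comp_apply]

end Standardization

theorem Nat.card_subtype_comp_eq_mul_card_fiber {G X : Type*} [Group G] (act : X → G → X)
    (φ : X → G) (act_act : ∀ x g h, act (act x g) h = act x (g * h)) (act_one : ∀ x, act x 1 = x)
    (φ_act : ∀ x g, φ (act x g) = φ x * g) (P : G → Prop) :
    Nat.card {x // P (φ x)} = Nat.card {g // P g} * Nat.card {x // φ x = 1} := by
  rw [← Nat.card_prod]
  exact Nat.card_congr
    { toFun x := (⟨φ x, x.2⟩, ⟨act x (φ x)⁻¹, by rw [φ_act, mul_inv_cancel]⟩)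
      invFun y := ⟨act y.2 y.1, by rw [φ_act, y.2.2, one_mul]; exact y.1.2⟩
      left_inv x := Subtype.ext (by simp only [act_act, inv_mul_cancel, act_one])
      right_inv y := by
        ext
        · simp only [φ_act, y.2.2, one_mul]
        · simp only [φ_act, y.2.2, one_mul, act_act, mul_inv_cancel, act_one] }

theorem Equiv.injective_sigma_mk {ι β : Type*} {L : ι → ℕ} (e : (Σ i, Fin (L i)) ≃ β)
    (i : ι) :
    Function.Injective fun j : Fin (L i) => e ⟨i, j⟩ :=
  e.injective.comp sigma_mk_injective

section BlockPattern

variable {ι β : Type*} [LinearOrder β] {L : ι → ℕ}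

def blockPattern (e : (Σ i, Fin (L i)) ≃ β) (i : ι) : Equiv.Perm (Fin (L i)) :=
  stdPerm fun j => e ⟨i, j⟩

theorem blockPattern_lt_blockPattern (e : (Σ i, Fin (L i)) ≃ β) (i : ι) (a b : Fin (L i)) :
    blockPattern e i a < blockPattern e i b ↔ e ⟨i, a⟩ < e ⟨i, b⟩ :=
  stdPerm_lt_stdPerm (e.injective_sigma_mk i) a b

theorem blockPattern_sigmaCongrRight_trans (e : (Σ i, Fin (L i)) ≃ β)
    (g : ∀ i, Equiv.Perm (Fin (L i))) :
    blockPattern ((Equiv.sigmaCongrRight g).trans e) = blockPattern e * g :=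
  funext fun i => stdPerm_comp (e.injective_sigma_mk i) (g i)

theorem card_blockPattern_eq_one [Fintype ι] [Fintype β]
    (hβ : Fintype.card β = ∑ i, L i) :
    Nat.card {e : (Σ i, Fin (L i)) ≃ β // blockPattern e = 1} = Nat.multinomial univ L := by
  have hfiber := Nat.card_subtype_comp_eq_mul_card_fiber
    (fun (e : (Σ i, Fin (L i)) ≃ β) (g : ∀ i, Equiv.Perm (Fin (L i))) =>
      (Equiv.sigmaCongrRight g).trans e) blockPattern
    (fun _ _ _ => rfl) (fun _ => rfl) blockPattern_sigmaCongrRight_trans fun _ => True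
  have hcard : Nat.card ((Σ i, Fin (L i)) ≃ β) = (∑ i, L i).factorial := by
    have hsize : Fintype.card (Σ i, Fin (L i)) = Fintype.card β := by simp [hβ]
    rw [Nat.card_congr (Equiv.equivCongr (Fintype.equivOfCardEq hsize) (.refl β)), Nat.card_perm,
      Nat.card_eq_fintype_card, hβ]
  rw [Nat.card_congr (Equiv.subtypeUnivEquiv fun _ => trivial),
    Nat.card_congr (Equiv.subtypeUnivEquiv fun _ => trivial), hcard, Nat.card_pi] at hfiber
  simp only [Nat.card_perm, Nat.card_fin] at hfiber
  refine Nat.eq_of_mul_eq_mul_left (prod_pos fun i (_ : i ∈ univ) => (L i).factorial_pos) ?_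
  rw [Nat.multinomial_spec, hfiber]

end BlockPattern

theorem statement11_general (n k : ℕ) (L : Fin k → ℕ)
    (hsum : ∑ i, L i = n) :
    Nat.card {σ : Equiv.Perm (Fin n) //
        ∀ mIdx, IsAltDescent σ mIdx → ∃ i : ℕ, 1 ≤ i ∧ i < k ∧
          mIdx = ∑ j ∈ Finset.univ.filter (fun j : Fin k => (j : ℕ) < i), L j} =
      Nat.multinomial Finset.univ L * ∏ i, eulerNum (L i) := by
  subst hsum
  have hcond (σ : Equiv.Perm (Fin (∑ i, L i))) :
      (∀ m, IsAltDescent σ m → IsBlockBoundary L m) ↔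
        ∀ i : Fin k, IsZigzag (blockStart L i) (blockPattern (finSigmaFinEquiv.trans σ) i) :=
    (altDescents_subset_blockBoundaries_iff L σ).trans <| forall_congr' fun i => isZigzag_congr
      fun a b => (blockPattern_lt_blockPattern (finSigmaFinEquiv.trans σ) i a b).symm
  calc _ = Nat.card {e : (Σ i, Fin (L i)) ≃ Fin (∑ i, L i) //
          ∀ i : Fin k, IsZigzag (blockStart L i) (blockPattern e i)} :=
        Nat.card_congr (Equiv.subtypeEquiv (Equiv.equivCongr finSigmaFinEquiv.symm (.refl _))
          hcond)
    _ = Nat.card {g : ∀ i, Equiv.Perm (Fin (L i)) //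
            ∀ i : Fin k, IsZigzag (blockStart L i) (g i)} *
          Nat.card {e : (Σ i, Fin (L i)) ≃ Fin (∑ i, L i) // blockPattern e = 1} :=
        Nat.card_subtype_comp_eq_mul_card_fiber _ _ (fun _ _ _ => rfl) (fun _ => rfl)
          blockPattern_sigmaCongrRight_trans
          fun g => ∀ i : Fin k, IsZigzag (blockStart L i) (g i)
    _ = _ := by
      rw [Nat.card_congr (Equiv.subtypePiEquivPi (p := fun i (q : Equiv.Perm (Fin (L i))) =>
        IsZigzag (blockStart L i) q)), Nat.card_pi, card_blockPattern_eq_one (by simp)]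
      simp only [card_isZigzag, mul_comm]

/-- for a composition `L = (L₁, …, L_k)` of `n`, the number of permutations
of `[n]` whose set of alternating descents is contained in
`D(L) = {L₁, L₁+L₂, …, L₁+⋯+L_{k−1}}` equals `(n!/(L₁!·⋯·L_k!))·E_{L₁}·⋯·E_{L_k}`. -/
theorem statement11 (n k : ℕ) (L : Fin k → ℕ) (hpos : ∀ i, 0 < L i)
    (hsum : ∑ i, L i = n) :
    Nat.card {σ : Equiv.Perm (Fin n) //
        ∀ mIdx, IsAltDescent σ mIdx → ∃ i : ℕ, 1 ≤ i ∧ i < k ∧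
          mIdx = ∑ j ∈ Finset.univ.filter (fun j : Fin k => (j : ℕ) < i), L j} =
      Nat.multinomial Finset.univ L * ∏ i, eulerNum (L i) :=
  statement11_general n k L hsum
end

section
/- Work in the ring of formal power series in X over the polynomial ring ℚ[t]. Let Ê = Σ_{n=0}^∞ Eₙ·Xⁿ/n!, and for n ≥ 1 let Âₙ(t) = Σ_{π ∈ Sₙ} t^{altdes(π)+1}, where the sum is over all permutations of [n]. Then (1 − t·((rescale by (1−t)) applied to Ê)) · (1 + Σ_{n=1}^∞ Âₙ(t)·Xⁿ/n!) = 1 − t, where rescaling by (1−t) multiplies the coefficient of Xⁿ by (1−t)ⁿ. -/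
/-- The number of alternating descents of `σ`. -/
def altdes {n : ℕ} (σ : Equiv.Perm (Fin n)) : ℕ :=
  ((Finset.range n).filter (fun i => IsAltDescent σ i)).card

namespace AltDescent

open Finset Equiv Nat

variable {n : ℕ}

/-- Gaps are numbered from `1` as in the paper, positions in `Fin n` from `0`: gap `i + 1`
lies between positions `i` and `i + 1`. -/
def AscentsAgreeOff (p : ℕ → Prop) (S : Finset ℕ) (σ : Perm (Fin n)) : Prop :=
  ∀ i (h : i + 1 < n), i + 1 ∉ S → (σ ⟨i, by omega⟩ < σ ⟨i + 1, h⟩ ↔ p i)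

noncomputable def patternCount (n : ℕ) (p : ℕ → Prop) (S : Finset ℕ) : ℕ :=
  Nat.card {σ : Perm (Fin n) // AscentsAgreeOff p S σ}

lemma patternCount_insert_of_le {p : ℕ → Prop} {S : Finset ℕ} {k : ℕ} (hk : n ≤ k) :
    patternCount n p (insert k S) = patternCount n p S := by
  refine Nat.card_congr (subtypeEquivRight fun σ => forall_congr' fun i => ?_)
  refine forall_congr' fun h => ?_
  rw [mem_insert, not_or, and_iff_right (by omega)]

lemma patternCount_not (p : ℕ → Prop) (S : Finset ℕ) :
    patternCount n (fun i => ¬ p i) S = patternCount n p S := by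
  refine Nat.card_congr (subtypeEquiv (Equiv.mulLeft Fin.revPerm) fun σ => forall_congr' fun i =>
    forall_congr' fun h => imp_congr_right fun _ => ?_).symm
  have hne : σ ⟨i, by omega⟩ ≠ σ ⟨i + 1, h⟩ := σ.injective.ne (by simp)
  simp only [coe_mulLeft, Perm.mul_apply, Fin.revPerm_apply, Fin.rev_lt_rev]
  rw [← not_iff_not (b := ¬ p i), not_not, not_lt, hne.le_iff_lt]

lemma patternCount_iff_left (c : Prop) (p : ℕ → Prop) (S : Finset ℕ) :
    patternCount n (fun i => c ↔ p i) S = patternCount n p S := by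
  by_cases hc : c
  · simp only [hc, true_iff]
  · simp only [hc, false_iff]
    exact patternCount_not p S

section Shuffle

variable {a b : ℕ}

lemma card_compl_of_card_eq {A : Finset (Fin (a + b))} (hA : #A = a) : #Aᶜ = b := by
  rw [card_compl, Fintype.card_fin, hA, Nat.add_sub_cancel_left]

variable (x : (Perm (Fin a) × Perm (Fin b)) × {A : Finset (Fin (a + b)) // #A = a})

/-- The map `Fin (a + b) → Fin (a + b)` whose first `a` values fill `A` in the relative order
given by `τ₁` and whose last `b` values fill `Aᶜ` in the relative order given by `τ₂`,
where `x = ((τ₁, τ₂), A)`. -/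
noncomputable def shuffleFun : Fin (a + b) → Fin (a + b) :=
  Fin.append (x.2.1.orderEmbOfFin x.2.2 ∘ x.1.1)
    (x.2.1ᶜ.orderEmbOfFin (card_compl_of_card_eq x.2.2) ∘ x.1.2)

lemma shuffleFun_injective : Function.Injective (shuffleFun x) := by
  refine Fin.append_injective_iff.mpr ⟨(RelEmbedding.injective _).comp x.1.1.injective,
    (RelEmbedding.injective _).comp x.1.2.injective, fun i j h => ?_⟩
  have hA := orderEmbOfFin_mem x.2.1 x.2.2 (x.1.1 i)
  rw [Function.comp_apply, Function.comp_apply] at h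
  rw [h] at hA
  exact mem_compl.mp (orderEmbOfFin_mem _ _ _) hA

noncomputable def shuffle : Perm (Fin (a + b)) :=
  ofBijective (shuffleFun x) (Finite.injective_iff_bijective.mp (shuffleFun_injective x))

lemma shuffle_castAdd (i : Fin a) :
    shuffle x (Fin.castAdd b i) = x.2.1.orderEmbOfFin x.2.2 (x.1.1 i) := by
  simp [shuffle, shuffleFun]

lemma shuffle_natAdd (j : Fin b) :
    shuffle x (Fin.natAdd a j) =
      x.2.1ᶜ.orderEmbOfFin (card_compl_of_card_eq x.2.2) (x.1.2 j) := by
  simp [shuffle, shuffleFun]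

lemma image_shuffle_castAdd : univ.image (fun i => shuffle x (Fin.castAdd b i)) = x.2.1 := by
  simp_rw [shuffle_castAdd]
  change univ.image (x.2.1.orderEmbOfFin x.2.2 ∘ x.1.1) = _
  rw [← image_image, image_univ_equiv, image_orderEmbOfFin_univ]

lemma shuffle_injective : Function.Injective (shuffle (a := a) (b := b)) := by
  rintro ⟨⟨τ₁, τ₂⟩, A, hA⟩ ⟨⟨τ₁', τ₂'⟩, A', hA'⟩ h
  obtain rfl : A = A' := (image_shuffle_castAdd ((τ₁, τ₂), ⟨A, hA⟩)).symm.trans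
    (h ▸ image_shuffle_castAdd ((τ₁', τ₂'), ⟨A', hA'⟩))
  have h₁ : τ₁ = τ₁' := Equiv.ext fun i => by
    simpa [shuffle_castAdd] using DFunLike.congr_fun h (Fin.castAdd b i)
  have h₂ : τ₂ = τ₂' := Equiv.ext fun j => by
    simpa [shuffle_natAdd] using DFunLike.congr_fun h (Fin.natAdd a j)
  rw [h₁, h₂]

lemma shuffle_bijective : Function.Bijective (shuffle (a := a) (b := b)) := by
  refine (Fintype.bijective_iff_injective_and_card _).mpr ⟨shuffle_injective, ?_⟩
  simp only [Fintype.card_prod, Fintype.card_perm, Fintype.card_finset_len, Fintype.card_fin]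
  rw [Nat.choose_symm_add, ← Nat.add_choose_mul_factorial_mul_factorial a b]
  ring

lemma shuffle_lt_shuffle_left {i j : ℕ} (hi : i < a) (hj : j < a) :
    shuffle x ⟨i, by omega⟩ < shuffle x ⟨j, by omega⟩ ↔ x.1.1 ⟨i, hi⟩ < x.1.1 ⟨j, hj⟩ :=
  (shuffle_castAdd x ⟨i, hi⟩).symm ▸ (shuffle_castAdd x ⟨j, hj⟩).symm ▸ OrderEmbedding.lt_iff_lt _

lemma shuffle_lt_shuffle_right {i j : ℕ} (hi : i < b) (hj : j < b) :
    shuffle x ⟨a + i, by omega⟩ < shuffle x ⟨a + j, by omega⟩ ↔ x.1.2 ⟨i, hi⟩ < x.1.2 ⟨j, hj⟩ :=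
  (shuffle_natAdd x ⟨i, hi⟩).symm ▸ (shuffle_natAdd x ⟨j, hj⟩).symm ▸ OrderEmbedding.lt_iff_lt _

lemma ascentsAgreeOff_shuffle_iff {p : ℕ → Prop} {S : Finset ℕ} (ha : a ∈ S)
    (hS : ∀ i ∈ S, i ≤ a) :
    AscentsAgreeOff p S (shuffle x) ↔
      AscentsAgreeOff p S x.1.1 ∧ AscentsAgreeOff (fun i => p (a + i)) ∅ x.1.2 := by
  constructor
  · intro H
    refine ⟨fun i hi hiS => ?_, fun i hi _ => ?_⟩
    · rw [← shuffle_lt_shuffle_left]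
      exact H i (by omega) hiS
    · rw [← shuffle_lt_shuffle_right]
      exact H (a + i) (by omega) fun h => by have := hS _ h; omega
  · rintro ⟨H₁, H₂⟩ i hi hiS
    rcases lt_trichotomy (i + 1) a with hlt | rfl | hgt
    · rw [shuffle_lt_shuffle_left _ (by omega) hlt]
      exact H₁ i hlt hiS
    · exact absurd ha hiS
    · obtain ⟨j, rfl⟩ : ∃ j, i = a + j := ⟨i - a, by omega⟩
      exact (shuffle_lt_shuffle_right x (i := j) (j := j + 1) _ _).trans
        (H₂ j (by omega) (notMem_empty _))

theorem patternCount_add {p : ℕ → Prop} {S : Finset ℕ} (ha : a ∈ S) (hS : ∀ i ∈ S, i ≤ a) :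
    patternCount (a + b) p S =
      patternCount a p S * patternCount b (fun i => p (a + i)) ∅ * (a + b).choose a := by
  let e := (subtypeEquiv (ofBijective _ shuffle_bijective) fun x =>
      (ascentsAgreeOff_shuffle_iff x ha hS).symm).symm.trans
    ((prodSubtypeFstEquivSubtypeProd (p := fun τ : Perm (Fin a) × Perm (Fin b) =>
      AscentsAgreeOff p S τ.1 ∧ AscentsAgreeOff (fun i => p (a + i)) ∅ τ.2)).trans
        (prodCongr subtypeProdEquivProd (Equiv.refl _)))
  rw [patternCount, Nat.card_congr e, Nat.card_prod, Nat.card_prod, Nat.card_eq_fintype_card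
    (α := {A : Finset (Fin (a + b)) // #A = a}), Fintype.card_finset_len, Fintype.card_fin]
  rfl

end Shuffle

lemma permEnt_succ (σ : Perm (Fin n)) {i : ℕ} (h : i < n) :
    permEnt σ (i + 1) = σ ⟨i, h⟩ + 1 := by
  rw [permEnt, dif_pos (by omega)]
  rfl

lemma val_ne_val_succ (σ : Perm (Fin n)) {i : ℕ} (h : i + 1 < n) :
    (σ ⟨i, by omega⟩ : ℕ) ≠ σ ⟨i + 1, h⟩ :=
  Fin.val_ne_of_ne (σ.injective.ne (by simp))

lemma isAltDescent_succ_iff (σ : Perm (Fin n)) {i : ℕ} (h : i + 1 < n) :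
    IsAltDescent σ (i + 1) ↔ ¬ (σ ⟨i, by omega⟩ < σ ⟨i + 1, h⟩ ↔ Even i) := by
  have hne := val_ne_val_succ σ h
  simp only [IsAltDescent, permEnt_succ σ h, permEnt_succ σ (Nat.lt_of_succ_lt h), Fin.lt_def,
    Nat.even_iff]
  omega

def altDescentSet (σ : Perm (Fin n)) : Finset ℕ := (range n).filter (IsAltDescent σ ·)

lemma altDescentSet_subset_iff (σ : Perm (Fin n)) (S : Finset ℕ) :
    altDescentSet σ ⊆ S ↔ AscentsAgreeOff Even S σ := by
  constructor
  · intro hσ i h hiS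
    by_contra hi
    exact hiS (hσ (mem_filter.mpr ⟨mem_range.mpr h, (isAltDescent_succ_iff σ h).mpr hi⟩))
  · intro hσ j hj
    obtain ⟨hjn, hj1, -⟩ := (mem_filter.mp hj).2
    obtain ⟨i, rfl⟩ : ∃ i, j = i + 1 := ⟨j - 1, by omega⟩
    by_contra hjS
    exact (isAltDescent_succ_iff σ hj1).mp (mem_filter.mp hj).2 (hσ i hj1 hjS)

lemma altDescentSet_subset_Icc (σ : Perm (Fin n)) : altDescentSet σ ⊆ Icc 1 (n - 1) := by
  intro j hj
  obtain ⟨h1, h2, -⟩ := (mem_filter.mp hj).2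
  exact mem_Icc.mpr ⟨h1, by omega⟩

lemma isAltPerm_iff (σ : Perm (Fin n)) :
    IsAltPerm σ ↔ AscentsAgreeOff (fun i => ¬ Even i) ∅ σ := by
  refine ⟨fun hσ i h _ => ?_, fun hσ j hj1 hj => ?_⟩
  · have hne := val_ne_val_succ σ h
    have := hσ (i + 1) (by omega) h
    simp only [permEnt_succ σ h, permEnt_succ σ (Nat.lt_of_succ_lt h), Fin.lt_def,
      Nat.even_iff] at this ⊢
    omega
  · obtain ⟨i, rfl⟩ : ∃ i, j = i + 1 := ⟨j - 1, by omega⟩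
    have hne := val_ne_val_succ σ hj
    have := hσ i hj (notMem_empty _)
    simp only [permEnt_succ σ hj, permEnt_succ σ (Nat.lt_of_succ_lt hj), Fin.lt_def,
      Nat.even_iff] at this ⊢
    omega

lemma eulerNum_eq_patternCount (n : ℕ) : eulerNum n = patternCount n Even ∅ := by
  rw [← patternCount_not]
  exact Nat.card_congr (subtypeEquivRight isAltPerm_iff)

lemma eulerNum_zero : eulerNum 0 = 1 := by
  rw [eulerNum, Nat.card_eq_one_iff_unique]
  exact ⟨inferInstance, ⟨⟨1, fun i _ h => absurd h (by omega)⟩⟩⟩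

lemma patternCount_even_insert {m k : ℕ} {S : Finset ℕ} (hk : k ≤ m) (hS : ∀ i ∈ S, i ≤ k) :
    patternCount m Even (insert k S) = patternCount k Even S * eulerNum (m - k) * m.choose k := by
  obtain ⟨b, rfl⟩ := Nat.exists_eq_add_of_le hk
  have hS' : ∀ i ∈ insert k S, i ≤ k := by simpa using hS
  rw [patternCount_add (mem_insert_self k S) hS', patternCount_insert_of_le le_rfl,
    Nat.add_sub_cancel_left, eulerNum_eq_patternCount]
  simp_rw [Nat.even_add]
  rw [patternCount_iff_left]

section Polynomials

variable {R : Type*} [CommRing R]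

lemma sum_powerset_filter_superset {α : Type*} [DecidableEq α] (t : R) {D I : Finset α}
    (hDI : D ⊆ I) :
    ∑ S ∈ I.powerset with D ⊆ S, t ^ #S * (1 - t) ^ (#I - #S) = t ^ #D := by
  have hIcc : {S ∈ I.powerset | D ⊆ S} = Icc D I := by
    ext S
    simp [and_comm]
  rw [hIcc, Icc_eq_image_powerset hDI, sum_image]
  · calc ∑ T ∈ (I \ D).powerset, t ^ #(D ∪ T) * (1 - t) ^ (#I - #(D ∪ T))
        = ∑ T ∈ (I \ D).powerset, t ^ #D * (t ^ #T * (1 - t) ^ (#(I \ D) - #T)) := by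
          refine sum_congr rfl fun T hT => ?_
          have hT' := mem_powerset.mp hT
          have hdisj : Disjoint D T := disjoint_of_subset_right hT' disjoint_sdiff
          rw [card_union_of_disjoint hdisj, card_sdiff_of_subset hDI, pow_add, Nat.sub_add_eq,
            mul_assoc]
      _ = t ^ #D := by rw [← mul_sum, sum_pow_mul_eq_add_pow, add_sub_cancel, one_pow, mul_one]
  · intro T hT T' hT' h
    have hdisj : ∀ U ∈ (I \ D).powerset, Disjoint D U := fun U hU =>
      disjoint_of_subset_right (mem_powerset.mp hU) disjoint_sdiff
    rw [← union_sdiff_cancel_left (hdisj T hT), ← union_sdiff_cancel_left (hdisj T' hT')]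
    exact congrArg (· \ D) h

lemma sum_pow_card_eq_sum_powerset {ι α : Type*} [Fintype ι] [DecidableEq α] (t : R)
    (D : ι → Finset α) {I : Finset α} (hD : ∀ x, D x ⊆ I) :
    ∑ x, t ^ #(D x) =
      ∑ S ∈ I.powerset, (#{x | D x ⊆ S} : R) * (t ^ #S * (1 - t) ^ (#I - #S)) := by
  simp_rw [← sum_powerset_filter_superset t (hD _), sum_filter, card_filter, Nat.cast_sum,
    sum_mul]
  rw [sum_comm]
  simp

/-- The `n`-th coefficient `Âₙ(t)` of the series `1 + Σ Âₙ(t) Xⁿ/n!`; its constant term `1` is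
stored as `Â₀`. -/
def altDesSum (t : R) (n : ℕ) : R :=
  if n = 0 then 1 else ∑ σ : Perm (Fin n), t ^ (altdes σ + 1)

lemma altDesSum_eq_sum_powerset (t : R) {n : ℕ} (hn : n ≠ 0) :
    altDesSum t n = ∑ S ∈ (Icc 1 (n - 1)).powerset,
      (patternCount n Even S : R) * (t ^ (#S + 1) * (1 - t) ^ (n - 1 - #S)) := by
  have hcount (S : Finset ℕ) :
      #{σ : Perm (Fin n) | altDescentSet σ ⊆ S} = patternCount n Even S := by
    rw [← Fintype.card_subtype, ← Nat.card_eq_fintype_card]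
    exact Nat.card_congr (subtypeEquivRight fun σ => altDescentSet_subset_iff σ S)
  rw [altDesSum, if_neg hn]
  simp_rw [pow_succ]
  rw [← sum_mul, show altdes = fun σ : Perm (Fin n) => #(altDescentSet σ) from rfl,
    sum_pow_card_eq_sum_powerset t _ altDescentSet_subset_Icc, sum_mul]
  simp only [hcount, Nat.card_Icc, Nat.add_sub_cancel]
  refine sum_congr rfl fun S _ => by ring

lemma sum_powerset_Icc_eq_sum_max {M : Type*} [AddCommMonoid M] (f : Finset ℕ → M) (n : ℕ) :
    ∑ S ∈ (Icc 1 n).powerset, f S =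
      f ∅ + ∑ k ∈ range n, ∑ S ∈ (Icc 1 k).powerset, f (insert (k + 1) S) := by
  induction n with
  | zero => simp
  | succ n ih =>
    rw [← insert_Icc_right_eq_Icc_add_one (by omega), sum_powerset_insert (by simp), ih,
      sum_range_succ, add_assoc]

lemma altDesSum_succ (t : R) (n : ℕ) :
    altDesSum t (n + 1) = ∑ k ∈ range (n + 1),
      ((n + 1).choose k * altDesSum t k * eulerNum (n + 1 - k) : R) * (t * (1 - t) ^ (n - k)) := by
  rw [altDesSum_eq_sum_powerset t n.add_one_ne_zero, Nat.add_sub_cancel,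
    sum_powerset_Icc_eq_sum_max, sum_range_succ', add_comm]
  congr 1
  · refine sum_congr rfl fun k hk => ?_
    have hkn := mem_range.mp hk
    rw [altDesSum_eq_sum_powerset t k.add_one_ne_zero, Nat.add_sub_cancel, mul_sum, sum_mul,
      sum_mul]
    refine sum_congr rfl fun S hS => ?_
    have hSk : ∀ i ∈ S, i ≤ k := fun i hi => (mem_Icc.mp (mem_powerset.mp hS hi)).2
    have hcard : #S ≤ k := (card_le_card (mem_powerset.mp hS)).trans_eq (Nat.card_Icc 1 k)
    rw [card_insert_of_notMem fun h => by have := hSk _ h; omega,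
      patternCount_even_insert (by omega) fun i hi => (hSk i hi).trans k.le_succ,
      show n - (#S + 1) = (k - #S) + (n - (k + 1)) by omega, pow_add]
    push_cast
    ring
  · simp [altDesSum, eulerNum_eq_patternCount]

lemma altDesSum_succ_eq_mul_sum (t : R) (n : ℕ) :
    altDesSum t (n + 1) = t * ∑ k ∈ range (n + 2),
      (n + 1).choose k * altDesSum t k * ((1 - t) ^ (n + 1 - k) * eulerNum (n + 1 - k)) := by
  have hlow : t * ∑ k ∈ range (n + 1),
      (n + 1).choose k * altDesSum t k * ((1 - t) ^ (n + 1 - k) * eulerNum (n + 1 - k)) =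
      (1 - t) * altDesSum t (n + 1) := by
    rw [altDesSum_succ, mul_sum, mul_sum]
    refine sum_congr rfl fun k hk => ?_
    rw [show n + 1 - k = n - k + 1 by have := mem_range.mp hk; omega, pow_succ]
    ring
  rw [sum_range_succ, mul_add, hlow, Nat.choose_self, Nat.sub_self, eulerNum_zero]
  push_cast
  ring

end Polynomials

lemma coeff_mul_mk_factorial_inv {R : Type*} [CommRing R] [Algebra ℚ R] (a b : ℕ → R) (n : ℕ) :
    PowerSeries.coeff n (PowerSeries.mk (fun k => algebraMap ℚ R (k ! : ℚ)⁻¹ * a k) *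
      PowerSeries.mk (fun k => algebraMap ℚ R (k ! : ℚ)⁻¹ * b k)) =
      algebraMap ℚ R (n ! : ℚ)⁻¹ * ∑ k ∈ range (n + 1), n.choose k * a k * b (n - k) := by
  rw [PowerSeries.coeff_mul, Nat.sum_antidiagonal_eq_sum_range_succ_mk, mul_sum]
  refine sum_congr rfl fun k hk => ?_
  have hkn := Nat.lt_succ_iff.mp (mem_range.mp hk)
  have hfact : (k ! : ℚ)⁻¹ * ((n - k)! : ℚ)⁻¹ = (n ! : ℚ)⁻¹ * n.choose k := by
    rw [Nat.cast_choose ℚ hkn]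
    field_simp
  have hfactR := congrArg (algebraMap ℚ R) hfact
  rw [map_mul, map_mul, map_natCast] at hfactR
  simp only [PowerSeries.coeff_mk]
  linear_combination (a k * b (n - k)) * hfactR

end AltDescent

/-- in `(ℚ[t])⟦X⟧`, with `Ê = Σₙ Eₙ·Xⁿ/n!` and
`Âₙ(t) = Σ_{π ∈ Sₙ} t^{altdes(π)+1}`, we have
`(1 − t·(rescale by (1−t) of Ê)) · (1 + Σ_{n≥1} Âₙ(t)·Xⁿ/n!) = 1 − t`. -/
theorem statement16 :
    (1 - PowerSeries.C (R := Polynomial ℚ) Polynomial.X *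
        PowerSeries.rescale (1 - Polynomial.X)
          (PowerSeries.mk (fun n : ℕ => Polynomial.C ((eulerNum n : ℚ) / n.factorial)))) *
      (PowerSeries.mk (fun n : ℕ =>
        if n = 0 then 1 else
          (∑ σ : Equiv.Perm (Fin n), (Polynomial.X : Polynomial ℚ) ^ (altdes σ + 1)) *
            Polynomial.C ((1 : ℚ) / n.factorial))) =
      PowerSeries.C (R := Polynomial ℚ) (1 - Polynomial.X) := by
  have hEuler : PowerSeries.rescale (1 - Polynomial.X)
      (PowerSeries.mk (fun n : ℕ => Polynomial.C ((eulerNum n : ℚ) / n.factorial))) =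
      PowerSeries.mk (fun n => algebraMap ℚ _ (n.factorial : ℚ)⁻¹ *
        ((1 - Polynomial.X) ^ n * (eulerNum n : Polynomial ℚ))) := by
    refine PowerSeries.ext fun n => ?_
    simp only [div_eq_inv_mul, map_mul, map_natCast, PowerSeries.coeff_rescale,
      PowerSeries.coeff_mk, Polynomial.algebraMap_eq]
    ring
  have hAlt : PowerSeries.mk (fun n : ℕ => if n = 0 then 1 else
      (∑ σ : Equiv.Perm (Fin n), (Polynomial.X : Polynomial ℚ) ^ (altdes σ + 1)) *
        Polynomial.C ((1 : ℚ) / n.factorial)) =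
      PowerSeries.mk (fun n =>
        algebraMap ℚ _ (n.factorial : ℚ)⁻¹ * AltDescent.altDesSum Polynomial.X n) := by
    refine PowerSeries.ext fun n => ?_
    by_cases hn : n = 0 <;> simp [AltDescent.altDesSum, hn, mul_comm]
  rw [hEuler, hAlt, sub_mul, one_mul, mul_assoc, mul_comm (PowerSeries.mk _)]
  refine PowerSeries.ext fun n => ?_
  rw [map_sub, PowerSeries.coeff_C_mul, AltDescent.coeff_mul_mk_factorial_inv,
    PowerSeries.coeff_mk, PowerSeries.coeff_C]
  cases n with
  | zero => simp [AltDescent.altDesSum, AltDescent.eulerNum_zero]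
  | succ n =>
    rw [AltDescent.altDesSum_succ_eq_mul_sum, if_neg n.succ_ne_zero]
    ring
end

section
/- Let d(n) be the number of permutations of [n] all of whose alternating runs have length less than 3 and whose last alternating run has length 2 (for n ≥ 2 this means: every i ∈ {1,…,n−2} has i or i+1 an alternating descent, and n−1 is not an alternating descent; d(0)=d(1)=0). Then in ℚ⟦X⟧: (Σ_{n=0}^∞ (E_{3n}·X^{3n}/(3n)! − E_{3n+1}·X^{3n+1}/(3n+1)!)) · (Σ_{n=0}^∞ d(n)·Xⁿ/n!) = Σ_{n=0}^∞ (E_{3n+2}·X^{3n+2}/(3n+2)! − E_{3n+3}·X^{3n+3}/(3n+3)!). -/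
/-- `dCount n`: the number of permutations of `[n]` all of whose alternating runs have
length less than 3 and whose last alternating run has length 2. -/
noncomputable def dCount (n : ℕ) : ℕ :=
  Nat.card {σ : Equiv.Perm (Fin n) //
    (∀ i, 1 ≤ i → i ≤ n - 2 → (IsAltDescent σ i ∨ IsAltDescent σ (i + 1))) ∧
    2 ≤ n ∧ ¬ IsAltDescent σ (n - 1)}

/-!
Fix `n` and let `W j` (resp. `V j`) count the permutations of `[n]` with no alternating descent
among the positions `1, …, j`, an alternating descent in every window `{g, g + 1}` with
`j + 1 ≤ g` (resp. `j + 2 ≤ g`) and `g + 1 < n`, and none at `n - 1`. Then `W 0 = d(n)` and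
`W j = V j = E_n` for `j ≥ n - 2`. Sorting by whether `j + 1` and `j + 2` are alternating descents
gives `W j + W (j + 1) + W (j + 2) = V j + V (j + 1)`. Cutting a permutation counted by `V j`
after position `j + 1` gives `V j = C(n, j + 1) E_{j + 1} d(n - j - 1)`: the head has no
alternating descent, and the tail has the property counted by `d` once complemented if `j + 1` is
odd. Weighting the recurrence by the signs `ε = 1, -1, 0, …` of period `3` telescopes to
`∑ₖ εₖ C(n, k) E_k d(n - k) = ε_{n+1} E_n`, the coefficient identity of the exponential
generating functions.
-/

namespace AltRuns

open Finset Equiv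

variable {n : ℕ}

lemma permEnt_of_le (σ : Perm (Fin n)) {i : ℕ} (h₁ : 1 ≤ i) (h₂ : i ≤ n) :
    permEnt σ i = (σ ⟨i - 1, by omega⟩ : ℕ) + 1 :=
  dif_pos ⟨h₁, h₂⟩

lemma permEnt_lt_permEnt_iff (σ : Perm (Fin n)) {i j : ℕ} (hi₁ : 1 ≤ i) (hi₂ : i ≤ n)
    (hj₁ : 1 ≤ j) (hj₂ : j ≤ n) :
    permEnt σ i < permEnt σ j ↔ σ ⟨i - 1, by omega⟩ < σ ⟨j - 1, by omega⟩ := by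
  rw [permEnt_of_le σ hi₁ hi₂, permEnt_of_le σ hj₁ hj₂, Fin.lt_def]
  omega

lemma permEnt_succ_lt_iff (σ : Perm (Fin n)) {i : ℕ} (h₁ : 1 ≤ i) (h₂ : i < n) :
    permEnt σ (i + 1) < permEnt σ i ↔ ¬ permEnt σ i < permEnt σ (i + 1) := by
  rw [not_lt, le_iff_lt_or_eq, permEnt_of_le σ h₁ h₂.le, permEnt_of_le σ (by omega) h₂]
  refine (or_iff_left fun h => ?_).symm
  have := congrArg Fin.val (σ.injective (Fin.val_injective (Nat.succ_injective h)))
  simp at this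
  omega

lemma permEnt_le (σ : Perm (Fin n)) (i : ℕ) : permEnt σ i ≤ n := by
  unfold permEnt
  split_ifs
  · exact Fin.isLt _
  · exact Nat.zero_le n

lemma permEnt_mulLeft_revPerm (σ : Perm (Fin n)) {i : ℕ} (h₁ : 1 ≤ i) (h₂ : i ≤ n) :
    permEnt (Fin.revPerm * σ) i = n + 1 - permEnt σ i := by
  rw [permEnt_of_le _ h₁ h₂, permEnt_of_le σ h₁ h₂, Perm.mul_apply, Fin.revPerm_apply,
    Fin.val_rev]
  have := (σ ⟨i - 1, by omega⟩).isLt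
  omega

/-- Alternating descents with the parity of the positions shifted by `b`, as they are seen by a
block of a longer permutation that starts after position `b`. -/
def IsAltDescentShift (b : ℕ) (σ : Perm (Fin n)) (i : ℕ) : Prop :=
  1 ≤ i ∧ i < n ∧ (permEnt σ i < permEnt σ (i + 1) ↔ Even (i + b))

lemma isAltDescentShift_zero (σ : Perm (Fin n)) : IsAltDescentShift 0 σ = IsAltDescent σ := by
  funext i
  simp only [IsAltDescentShift, IsAltDescent, add_zero, eq_iff_iff]
  refine and_congr_right fun h₁ => and_congr_right fun h₂ => ?_
  rw [permEnt_succ_lt_iff σ h₁ h₂]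
  rcases Nat.even_or_odd i with h | h
  · simp [h, Nat.even_iff.mp h]
  · simp [Nat.not_even_iff_odd.mpr h, Nat.odd_iff.mp h]

lemma isAltDescentShift_mulLeft_revPerm (b : ℕ) (σ : Perm (Fin n)) :
    IsAltDescentShift b (Fin.revPerm * σ) = IsAltDescentShift (b + 1) σ := by
  funext i
  simp only [IsAltDescentShift, eq_iff_iff, ← add_assoc, Nat.even_add_one]
  refine and_congr_right fun h₁ => and_congr_right fun h₂ => ?_
  have hlt : permEnt (Fin.revPerm * σ) i < permEnt (Fin.revPerm * σ) (i + 1) ↔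
      ¬ permEnt σ i < permEnt σ (i + 1) := by
    rw [permEnt_mulLeft_revPerm σ h₁ h₂.le,
      permEnt_mulLeft_revPerm σ (i := i + 1) (by omega) h₂, ← permEnt_succ_lt_iff σ h₁ h₂]
    have := permEnt_le σ i
    have := permEnt_le σ (i + 1)
    omega
  rw [hlt]
  tauto

lemma card_isAltDescentShift (P : (ℕ → Prop) → Prop) (b : ℕ) :
    Nat.card {σ : Perm (Fin n) // P (IsAltDescentShift b σ)} =
      Nat.card {σ : Perm (Fin n) // P (IsAltDescent σ)} := by
  induction b with
  | zero => simp_rw [isAltDescentShift_zero]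
  | succ b ih =>
    rw [← ih]
    refine Nat.card_congr ((Equiv.mulLeft Fin.revPerm).subtypeEquiv fun σ => ?_)
    rw [coe_mulLeft, isAltDescentShift_mulLeft_revPerm]

lemma isAltPerm_iff (σ : Perm (Fin n)) : IsAltPerm σ ↔ ∀ i, ¬ IsAltDescentShift 1 σ i := by
  simp only [IsAltPerm, IsAltDescentShift, not_and]
  refine forall_congr' fun i => forall_congr' fun h₁ => forall_congr' fun h₂ => ?_
  rw [permEnt_succ_lt_iff σ h₁ h₂, Nat.even_add_one]
  rcases Nat.even_or_odd i with h | h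
  · simp [h, Nat.even_iff.mp h]
  · simp [Nat.not_even_iff_odd.mpr h, Nat.odd_iff.mp h]

lemma eulerNum_eq_card :
    eulerNum n = Nat.card {σ : Perm (Fin n) // ∀ i, ¬ IsAltDescent σ i} := by
  rw [eulerNum, Nat.card_congr (Equiv.subtypeEquivRight isAltPerm_iff),
    card_isAltDescentShift (fun D => ∀ i, ¬ D i)]

lemma eulerNum_zero : eulerNum 0 = 1 := by
  rw [eulerNum, Nat.card_eq_one_iff_unique]
  exact ⟨inferInstance, ⟨⟨1, fun i _ h => by omega⟩⟩⟩

/-- With `D` the alternating descents: the alternating runs from position `s` on have length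
less than `3`. -/
def ShortRunsFrom (D : ℕ → Prop) (n s : ℕ) : Prop :=
  ∀ g, s ≤ g → g + 2 ≤ n → D g ∨ D (g + 1)

section ShortRunsFrom

variable {D : ℕ → Prop} {s : ℕ}

lemma ShortRunsFrom.mono {t : ℕ} (h : ShortRunsFrom D n s) (hst : s ≤ t) :
    ShortRunsFrom D n t :=
  fun g hg => h g (hst.trans hg)

lemma ShortRunsFrom.of_succ (hs : D s) (h : ShortRunsFrom D n (s + 1)) : ShortRunsFrom D n s :=
  fun g hg hgn => hg.eq_or_lt.elim (fun e => .inl (e ▸ hs)) (fun hlt => h g hlt hgn)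

lemma shortRunsFrom_iff (hs : s + 2 ≤ n) :
    ShortRunsFrom D n s ↔ (D s ∨ D (s + 1)) ∧ ShortRunsFrom D n (s + 1) :=
  ⟨fun h => ⟨h s le_rfl hs, h.mono s.le_succ⟩, fun ⟨hs, h⟩ g hg hgn =>
    hg.eq_or_lt.elim (fun e => e ▸ hs) (fun hlt => h g hlt hgn)⟩

end ShortRunsFrom

/-- With `D` the alternating descents: the first `j + 1` entries form one alternating run, the
runs from position `s` on are short, and the last one has length `2`. -/
def HeadTail (D : ℕ → Prop) (n j s : ℕ) : Prop :=
  (∀ i ≤ j, ¬ D i) ∧ ShortRunsFrom D n s ∧ ¬ D (n - 1)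

open scoped Classical in
lemma headTail_three_term_indicator (D : ℕ → Prop) {j : ℕ} (hj : j + 3 ≤ n) :
    (if HeadTail D n j (j + 1) then 1 else 0) + (if HeadTail D n (j + 1) (j + 2) then 1 else 0) +
        (if HeadTail D n (j + 2) (j + 3) then 1 else 0) =
      (if HeadTail D n j (j + 2) then 1 else 0) +
        (if HeadTail D n (j + 1) (j + 3) then 1 else (0 : ℕ)) := by
  have hhead (k : ℕ) : (∀ i ≤ k + 1, ¬ D i) ↔ (∀ i ≤ k, ¬ D i) ∧ ¬ D (k + 1) :=
    ⟨fun h => ⟨fun i hi => h i (by omega), h _ le_rfl⟩,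
      fun ⟨h, h'⟩ i hi => (Nat.le_succ_iff.mp hi).elim (h i) (· ▸ h')⟩
  have hmono : ShortRunsFrom D n (j + 2) → ShortRunsFrom D n (j + 3) := (·.mono (by omega))
  have hcover : D (j + 2) → ShortRunsFrom D n (j + 3) → ShortRunsFrom D n (j + 2) :=
    ShortRunsFrom.of_succ
  simp only [HeadTail, hhead, shortRunsFrom_iff (D := D) (s := j + 1) (by omega), add_assoc,
    Nat.reduceAdd]
  by_cases D (j + 1) <;> by_cases D (j + 2) <;> by_cases ShortRunsFrom D n (j + 2) <;>
    by_cases ShortRunsFrom D n (j + 3) <;> simp_all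

noncomputable def headTailCount (n j s : ℕ) : ℕ :=
  Nat.card {σ : Perm (Fin n) // HeadTail (IsAltDescent σ) n j s}

lemma headTailCount_three_term {j : ℕ} (hj : j + 3 ≤ n) :
    headTailCount n j (j + 1) + headTailCount n (j + 1) (j + 2) +
        headTailCount n (j + 2) (j + 3) =
      headTailCount n j (j + 2) + headTailCount n (j + 1) (j + 3) := by
  classical
  simp only [headTailCount, Nat.card_eq_fintype_card, Fintype.card_subtype, card_filter,
    ← sum_add_distrib]
  exact sum_congr rfl fun σ _ => headTail_three_term_indicator _ hj

lemma headTailCount_eq_eulerNum {j s : ℕ} (hj : n ≤ j + 2) (hs : n ≤ s + 1) :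
    headTailCount n j s = eulerNum n := by
  refine (Nat.card_congr (Equiv.subtypeEquivRight fun σ => ?_)).trans eulerNum_eq_card.symm
  refine ⟨fun ⟨hhead, _, hlast⟩ i hi => ?_,
    fun h => ⟨fun i _ => h i, fun g _ _ => by omega, h _⟩⟩
  rcases le_or_gt i j with hij | hij
  · exact hhead i hij hi
  · obtain rfl : i = n - 1 := by have := hi.2.1; omega
    exact hlast hi

lemma headTailCount_zero_one (hn : 2 ≤ n) : headTailCount n 0 1 = dCount n := by
  refine Nat.card_congr (Equiv.subtypeEquivRight fun σ => ?_)
  simp only [HeadTail, ShortRunsFrom, nonpos_iff_eq_zero, forall_eq]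
  refine ⟨fun ⟨_, hruns, hlast⟩ => ⟨fun g hg hgn => hruns g hg (by omega), hn, hlast⟩,
    fun ⟨hruns, _, hlast⟩ =>
      ⟨fun h => by have := h.1; omega, fun g hg hgn => hruns g hg (by omega), hlast⟩⟩

lemma dCount_of_lt_two (hn : n < 2) : dCount n = 0 :=
  Nat.card_eq_zero.mpr (.inl ⟨fun σ => by have := σ.2.2.1; omega⟩)

section Pattern

variable {α : Type*} [LinearOrder α] {p : ℕ} (A : Finset α) (hA : A.card = p)
  (f : Fin p → α) (hf : ∀ i, f i ∈ A) (hinj : Function.Injective f)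

/-- The relative order of an injective tuple `f` whose values fill the `p`-element set `A`. -/
noncomputable def pattern : Perm (Fin p) :=
  Equiv.ofBijective (fun i => (A.orderIsoOfFin hA).symm ⟨f i, hf i⟩)
    (Finite.injective_iff_bijective.mp fun i j h => hinj (by simpa using h))

lemma orderIsoOfFin_pattern (i : Fin p) :
    (A.orderIsoOfFin hA (pattern A hA f hf hinj i) : α) = f i := by
  simp [pattern]

lemma pattern_lt_pattern_iff (i j : Fin p) :
    pattern A hA f hf hinj i < pattern A hA f hf hinj j ↔ f i < f j := by
  rw [← (A.orderIsoOfFin hA).lt_iff_lt, ← Subtype.coe_lt_coe, orderIsoOfFin_pattern,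
    orderIsoOfFin_pattern]

end Pattern

section Split

variable {p q : ℕ}

def prefixValues (π : Perm (Fin (p + q))) : Finset (Fin (p + q)) :=
  univ.map ((Fin.castAddEmb q).trans π.toEmbedding)

lemma card_prefixValues (π : Perm (Fin (p + q))) : (prefixValues π).card = p := by
  simp [prefixValues]

lemma card_compl_prefixValues (π : Perm (Fin (p + q))) : (prefixValues π)ᶜ.card = q := by
  rw [card_compl, card_prefixValues, Fintype.card_fin, Nat.add_sub_cancel_left]

lemma apply_castAdd_mem_prefixValues (π : Perm (Fin (p + q))) (i : Fin p) :
    π (Fin.castAdd q i) ∈ prefixValues π := by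
  simp [prefixValues]

lemma apply_natAdd_mem_compl_prefixValues (π : Perm (Fin (p + q))) (i : Fin q) :
    π (Fin.natAdd p i) ∈ (prefixValues π)ᶜ := by
  simp only [prefixValues, mem_compl, mem_map]
  rintro ⟨j, -, h⟩
  have := congrArg Fin.val (π.injective h)
  simp at this
  omega

noncomputable def prefixPattern (π : Perm (Fin (p + q))) : Perm (Fin p) :=
  pattern _ (card_prefixValues π) _ (apply_castAdd_mem_prefixValues π)
    (π.injective.comp (Fin.castAdd_injective p q))

noncomputable def suffixPattern (π : Perm (Fin (p + q))) : Perm (Fin q) :=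
  pattern _ (card_compl_prefixValues π) _ (apply_natAdd_mem_compl_prefixValues π)
    (π.injective.comp (Fin.natAdd_injective q p))

lemma orderIsoOfFin_prefixPattern (π : Perm (Fin (p + q))) (i : Fin p) :
    ((prefixValues π).orderIsoOfFin (card_prefixValues π) (prefixPattern π i) : Fin (p + q)) =
      π (Fin.castAdd q i) :=
  orderIsoOfFin_pattern ..

lemma orderIsoOfFin_suffixPattern (π : Perm (Fin (p + q))) (i : Fin q) :
    ((prefixValues π)ᶜ.orderIsoOfFin (card_compl_prefixValues π) (suffixPattern π i) :
      Fin (p + q)) = π (Fin.natAdd p i) :=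
  orderIsoOfFin_pattern ..

noncomputable def splitPerm (p q : ℕ) :
    Perm (Fin (p + q)) ≃
      {A : Finset (Fin (p + q)) // A.card = p} × Perm (Fin p) × Perm (Fin q) :=
  Equiv.ofBijective
    (fun π => (⟨prefixValues π, card_prefixValues π⟩, prefixPattern π, suffixPattern π)) <|
    by
    have horderIso {k : ℕ} {A B : Finset (Fin (p + q))} (hA : A.card = k) (hB : B.card = k)
        (hAB : A = B) (x : Fin k) :
        (A.orderIsoOfFin hA x : Fin (p + q)) = B.orderIsoOfFin hB x := by
      subst hAB; rfl
    refine (Fintype.bijective_iff_injective_and_card _).mpr ⟨fun π₁ π₂ h => ?_, ?_⟩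
    · simp only [Prod.mk.injEq, Subtype.mk.injEq] at h
      obtain ⟨hA, hpre, hsuf⟩ := h
      ext x
      induction x using Fin.addCases with
      | left i =>
        rw [← orderIsoOfFin_prefixPattern, ← orderIsoOfFin_prefixPattern, hpre]
        exact congrArg Fin.val (horderIso _ _ hA _)
      | right i =>
        rw [← orderIsoOfFin_suffixPattern, ← orderIsoOfFin_suffixPattern, hsuf]
        exact congrArg Fin.val (horderIso _ _ (congrArg _ hA) _)
    · simp only [Fintype.card_perm, Fintype.card_prod, Fintype.card_finset_len, Fintype.card_fin,
        ← Nat.add_choose_mul_factorial_mul_factorial p q]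
      rw [Nat.choose_symm_add]
      ring

lemma card_prefixPattern_suffixPattern (P : Perm (Fin p) → Prop) (Q : Perm (Fin q) → Prop) :
    Nat.card {π : Perm (Fin (p + q)) // P (prefixPattern π) ∧ Q (suffixPattern π)} =
      (p + q).choose p * (Nat.card {σ // P σ} * Nat.card {τ // Q τ}) := by
  have e : {π : Perm (Fin (p + q)) // P (prefixPattern π) ∧ Q (suffixPattern π)} ≃
      {A : Finset (Fin (p + q)) // A.card = p} × {σ // P σ} × {τ // Q τ} :=
    ((splitPerm p q).subtypeEquiv (q := fun x => True ∧ P x.2.1 ∧ Q x.2.2)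
      fun _ => Iff.of_eq (true_and _).symm).trans <|
        subtypeProdEquivProd.trans <| (subtypeUnivEquiv fun _ => trivial).prodCongr
          subtypeProdEquivProd
  rw [Nat.card_congr e, Nat.card_prod, Nat.card_prod, Nat.card_eq_fintype_card (α := {A // _}),
    Fintype.card_finset_len, Fintype.card_fin]

end Split

section Transport

variable {p q : ℕ} (π : Perm (Fin (p + q)))

lemma permEnt_prefixPattern_lt_iff {i j : ℕ} (hi₁ : 1 ≤ i) (hi₂ : i ≤ p) (hj₁ : 1 ≤ j)
    (hj₂ : j ≤ p) :
    permEnt (prefixPattern π) i < permEnt (prefixPattern π) j ↔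
      permEnt π i < permEnt π j := by
  rw [permEnt_lt_permEnt_iff _ hi₁ hi₂ hj₁ hj₂,
    permEnt_lt_permEnt_iff π hi₁ (by omega) hj₁ (by omega)]
  exact pattern_lt_pattern_iff ..

lemma permEnt_suffixPattern_lt_iff {i j : ℕ} (hi₁ : 1 ≤ i) (hi₂ : i ≤ q) (hj₁ : 1 ≤ j)
    (hj₂ : j ≤ q) :
    permEnt (suffixPattern π) i < permEnt (suffixPattern π) j ↔
      permEnt π (p + i) < permEnt π (p + j) := by
  rw [permEnt_lt_permEnt_iff _ hi₁ hi₂ hj₁ hj₂,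
    permEnt_lt_permEnt_iff π (by omega) (by omega) (by omega) (by omega)]
  have hnat {k : ℕ} (h₁ : 1 ≤ k) (h₂ : k ≤ q) :
      (⟨p + k - 1, by omega⟩ : Fin (p + q)) = Fin.natAdd p ⟨k - 1, by omega⟩ := by
    ext; simp; omega
  rw [hnat hi₁ hi₂, hnat hj₁ hj₂]
  exact pattern_lt_pattern_iff ..

lemma isAltDescentShift_prefixPattern (b : ℕ) {i : ℕ} (hi : i < p) :
    IsAltDescentShift b (prefixPattern π) i ↔ IsAltDescentShift b π i := by
  unfold IsAltDescentShift
  by_cases h₁ : 1 ≤ i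
  · rw [permEnt_prefixPattern_lt_iff π h₁ hi.le (by omega) hi]
    simp [h₁, hi, show i < p + q by omega]
  · simp [h₁]

lemma isAltDescentShift_suffixPattern (b : ℕ) {i : ℕ} (hi : 1 ≤ i) :
    IsAltDescentShift (b + p) (suffixPattern π) i ↔ IsAltDescentShift b π (p + i) := by
  unfold IsAltDescentShift
  by_cases h₂ : i < q
  · rw [permEnt_suffixPattern_lt_iff π hi h₂.le (by omega) h₂,
      show p + i + 1 = p + (i + 1) by ring, show p + i + b = i + (b + p) by ring]
    simp [hi, h₂, show 1 ≤ p + i by omega]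
  · simp only [h₂, false_and, and_false, false_iff, not_and]
    omega

end Transport

lemma shortRunsFrom_add_iff {D E : ℕ → Prop} {p q : ℕ}
    (h : ∀ i, 1 ≤ i → (E i ↔ D (p + i))) :
    ShortRunsFrom D (p + q) (p + 1) ↔ ShortRunsFrom E q 1 := by
  refine ⟨fun hD i hi hiq => ?_, fun hE g hg hgn => ?_⟩
  · rw [h i hi, h (i + 1) (by omega)]
    exact hD (p + i) (by omega) (by omega)
  · obtain ⟨i, rfl⟩ : ∃ i, g = p + i := ⟨g - p, by omega⟩
    rw [add_assoc, ← h i (by omega), ← h (i + 1) (by omega)]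
    exact hE i (by omega) (by omega)

lemma headTailCount_split {j : ℕ} (hj : j + 3 ≤ n) :
    headTailCount n j (j + 2) = n.choose (j + 1) * (eulerNum (j + 1) * dCount (n - (j + 1))) := by
  obtain ⟨q, hq, rfl⟩ : ∃ q, 2 ≤ q ∧ n = j + 1 + q :=
    ⟨n - (j + 1), by omega, by omega⟩
  have hcond (π : Perm (Fin (j + 1 + q))) : HeadTail (IsAltDescent π) (j + 1 + q) j (j + 2) ↔
      (∀ i, ¬ IsAltDescent (prefixPattern π) i) ∧
        HeadTail (IsAltDescentShift (j + 1) (suffixPattern π)) q 0 1 := by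
    have hsuf (i : ℕ) (hi : 1 ≤ i) :
        IsAltDescentShift (j + 1) (suffixPattern π) i ↔ IsAltDescent π (j + 1 + i) := by
      rw [← isAltDescentShift_zero, ← isAltDescentShift_suffixPattern π 0 hi, zero_add]
    have hpre :
        (∀ i ≤ j, ¬ IsAltDescent π i) ↔ ∀ i, ¬ IsAltDescent (prefixPattern π) i := by
      simp only [← isAltDescentShift_zero]
      refine ⟨fun h i hi => ?_, fun h i hi => ?_⟩
      · have := hi.2.1
        exact h i (by omega) ((isAltDescentShift_prefixPattern π 0 this).mp hi)
      · exact (isAltDescentShift_prefixPattern π 0 (by omega)).not.mp (h i)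
    rw [HeadTail, HeadTail, hpre, show j + 2 = j + 1 + 1 by ring, shortRunsFrom_add_iff hsuf,
      show j + 1 + q - 1 = j + 1 + (q - 1) by omega, ← hsuf _ (by omega)]
    have hzero : ∀ i ≤ 0, ¬ IsAltDescentShift (j + 1) (suffixPattern π) i :=
      fun i hi h => by have := h.1; omega
    simp only [eq_true hzero, true_and]
  rw [headTailCount, Nat.card_congr (Equiv.subtypeEquivRight hcond),
    card_prefixPattern_suffixPattern (fun σ => ∀ i, ¬ IsAltDescent σ i)
      (fun τ => HeadTail (IsAltDescentShift (j + 1) τ) q 0 1), eulerNum_eq_card,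
    Nat.add_sub_cancel_left, card_isAltDescentShift (HeadTail · q 0 1),
    ← headTailCount_zero_one hq, headTailCount]

def eps3 (m : ℕ) : ℤ := if m % 3 = 0 then 1 else if m % 3 = 1 then -1 else 0

lemma eps3_add_eps3_add_eps3 (m : ℕ) : eps3 m + eps3 (m + 1) + eps3 (m + 2) = 0 := by
  unfold eps3
  split_ifs <;> omega

theorem add_sum_eps3_mul_eq_zero :
    ∀ (m : ℕ) (w v : ℕ → ℤ) (e : ℤ),
      (∀ j, j + 2 ≤ m → w j + w (j + 1) + w (j + 2) = v j + v (j + 1)) →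
      (∀ j, m ≤ j + 1 → w j = e ∧ v j = e) →
      w 0 + ∑ i ∈ range (m + 1), eps3 (i + 1) * v i = 0
  | 0, w, v, e, _, hend => by simp [(hend 0 (by omega)).1, (hend 0 (by omega)).2, eps3]
  | 1, w, v, e, _, hend => by
    simp [sum_range_succ, (hend 0 (by omega)).1, (hend 0 (by omega)).2, eps3]
  | m + 2, w, v, e, hrec, hend => by
    have h₁ := add_sum_eps3_mul_eq_zero (m + 1) (fun j => w (j + 1)) (fun j => v (j + 1)) e
      (fun j hj => by simpa [add_assoc] using hrec (j + 1) (by omega))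
      (fun j hj => hend (j + 1) (by omega))
    have h₂ := add_sum_eps3_mul_eq_zero m (fun j => w (j + 2)) (fun j => v (j + 2)) e
      (fun j hj => by simpa [add_assoc] using hrec (j + 2) (by omega))
      (fun j hj => hend (j + 2) (by omega))
    -- the instances for `m + 1` and `m` on the shifted sequences, plus the recurrence at `0`
    have h₀ := hrec 0 (by omega)
    have hcycle : ∑ i ∈ range (m + 1), eps3 (i + 3) * v (i + 2) +
        ∑ i ∈ range (m + 1), eps3 (i + 2) * v (i + 2) +
        ∑ i ∈ range (m + 1), eps3 (i + 1) * v (i + 2) = 0 := by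
      simp only [← sum_add_distrib, ← add_mul]
      refine sum_eq_zero fun i _ => ?_
      rw [show eps3 (i + 3) + eps3 (i + 2) + eps3 (i + 1) = 0 by
        linarith [eps3_add_eps3_add_eps3 (i + 1)], zero_mul]
    simp only [sum_range_succ' _ (m + 2), sum_range_succ' _ (m + 1)] at h₁ ⊢
    simp only [add_assoc, Nat.reduceAdd, zero_add] at h₀ h₁ h₂ ⊢
    rw [show eps3 1 = -1 from rfl, show eps3 2 = 0 from rfl] at *
    linear_combination hcycle - h₁ - h₂ + h₀

theorem sum_eps3_mul_choose_mul_eulerNum_mul_dCount (hn : 0 < n) :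
    ∑ k ∈ range (n + 1), eps3 k * n.choose k * eulerNum k * dCount (n - k) =
      eps3 (n + 1) * eulerNum n := by
  obtain rfl | ⟨N, rfl⟩ : n = 1 ∨ ∃ N, n = N + 2 := by
    rcases n with _ | _ | N
    exacts [absurd hn (lt_irrefl 0), .inl rfl, .inr ⟨N, rfl⟩]
  · simp [dCount_of_lt_two, eps3]
  have key := add_sum_eps3_mul_eq_zero (N + 1) (fun j => headTailCount (N + 2) j (j + 1))
    (fun j => headTailCount (N + 2) j (j + 2)) (eulerNum (N + 2))
    (fun j hj => by exact_mod_cast headTailCount_three_term (by omega))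
    (fun j hj => ⟨by exact_mod_cast headTailCount_eq_eulerNum (by omega) (by omega),
      by exact_mod_cast headTailCount_eq_eulerNum (by omega) (by omega)⟩)
  have hsplit : ∀ i ∈ range N,
      eps3 (i + 1) * ((N + 2).choose (i + 1) : ℤ) * eulerNum (i + 1) * dCount (N + 2 - (i + 1)) =
        eps3 (i + 1) * headTailCount (N + 2) i (i + 2) := by
    intro i hi
    rw [headTailCount_split (by simp at hi; omega)]
    push_cast
    ring
  rw [sum_range_succ, sum_range_succ] at key
  rw [sum_range_succ', sum_range_succ, sum_range_succ, sum_congr rfl hsplit]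
  simp only [headTailCount_zero_one (by omega : 2 ≤ N + 2),
    headTailCount_eq_eulerNum (n := N + 2) (j := N) (s := N + 2) (by omega) (by omega),
    headTailCount_eq_eulerNum (n := N + 2) (j := N + 1) (s := N + 1 + 2) (by omega) (by omega)]
    at key
  simp only [show N + 2 - (N + 1) = 1 by omega, Nat.sub_self, Nat.sub_zero,
    dCount_of_lt_two (by omega : 1 < 2), dCount_of_lt_two (by omega : 0 < 2), eulerNum_zero,
    Nat.choose_zero_right, show eps3 0 = 1 from rfl]
  linear_combination key - (eulerNum (N + 2) : ℤ) * eps3_add_eps3_add_eps3 (N + 1)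

lemma coeff_mk_div_factorial_mul {K : Type*} [Field K] [CharZero K] (a b : ℕ → K) (n : ℕ) :
    PowerSeries.coeff n (PowerSeries.mk (fun k => a k / k.factorial) *
        PowerSeries.mk (fun k => b k / k.factorial)) =
      (∑ k ∈ range (n + 1), n.choose k * a k * b (n - k)) / n.factorial := by
  rw [PowerSeries.coeff_mul, Nat.sum_antidiagonal_eq_sum_range_succ_mk, sum_div]
  refine sum_congr rfl fun k hk => ?_
  simp only [PowerSeries.coeff_mk]
  have : (n.factorial : K) ≠ 0 := Nat.cast_ne_zero.mpr n.factorial_ne_zero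
  rw [Nat.cast_choose K (by simp at hk; omega)]
  field_simp

end AltRuns

/-- in `ℚ⟦X⟧`,
`(Σₙ (E_{3n}·X^{3n}/(3n)! − E_{3n+1}·X^{3n+1}/(3n+1)!)) · (Σₙ d(n)·Xⁿ/n!)
  = Σₙ (E_{3n+2}·X^{3n+2}/(3n+2)! − E_{3n+3}·X^{3n+3}/(3n+3)!)`. -/
theorem statement18 :
    (PowerSeries.mk (fun n : ℕ =>
        if n % 3 = 0 then (eulerNum n : ℚ) / n.factorial
        else if n % 3 = 1 then -((eulerNum n : ℚ) / n.factorial)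
        else 0)) *
      (PowerSeries.mk (fun n : ℕ => (dCount n : ℚ) / n.factorial)) =
    PowerSeries.mk (fun n : ℕ =>
        if n % 3 = 2 then (eulerNum n : ℚ) / n.factorial
        else if n % 3 = 0 ∧ 0 < n then -((eulerNum n : ℚ) / n.factorial)
        else 0) := by
  have hsigned (n : ℕ) : (if n % 3 = 0 then (eulerNum n : ℚ) / n.factorial
      else if n % 3 = 1 then -((eulerNum n : ℚ) / n.factorial) else 0) =
        ((AltRuns.eps3 n * eulerNum n : ℤ) : ℚ) / n.factorial := by
    unfold AltRuns.eps3; split_ifs <;> push_cast <;> ring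
  ext n
  simp only [hsigned]
  rw [AltRuns.coeff_mk_div_factorial_mul, PowerSeries.coeff_mk]
  rcases Nat.eq_zero_or_pos n with rfl | hn
  · simp [AltRuns.dCount_of_lt_two]
  have hrhs : (if n % 3 = 2 then (eulerNum n : ℚ) / n.factorial
      else if n % 3 = 0 ∧ 0 < n then -((eulerNum n : ℚ) / n.factorial) else 0) =
        ((AltRuns.eps3 (n + 1) * eulerNum n : ℤ) : ℚ) / n.factorial := by
    unfold AltRuns.eps3; split_ifs <;> first | omega | (push_cast; ring)
  rw [hrhs, ← AltRuns.sum_eps3_mul_choose_mul_eulerNum_mul_dCount hn]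
  push_cast
  exact congrArg (· / _) (Finset.sum_congr rfl fun k _ => by ring)
end
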